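/- arXiv:2501.12195 — 6 statements merged into one kernel-verified Lean document; each statement's English description precedes it below -/
import Mathlib

section
/- For two finite signed measures μ and ν on a Polish space X, each with total mass 1 and finite first moment, the quantity W₁(μ⁺+ν⁻, μ⁻+ν⁺) (the 1-Wasserstein distance between the balanced positive measures) does not depend on the choice of decompositions μ = μ⁺ − μ⁻ and ν = ν⁺ − ν⁻ into finite positive measures with finite first moments. -/
/-!
Another choice of decompositions adds one and the same finite measure to both arguments of `W1`,
since `(μ⁺ + ν⁻) + (μ⁻' + ν⁺') = (μ⁺' + ν⁻') + (μ⁻ + ν⁺)`. So it suffices that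
`W1 (α + γ) (β + γ) = W1 α β` for finite measures with finite first moments and `α X = β X`.

Gluing the identity coupling of `γ` onto a coupling of `α` and `β` gives `≤`. For `≥`, split a
coupling `π` of `α + γ` and `β + γ` along its first marginal into `θ₀` (over `α`) and
`ρ = γ ⊗ K` (over `γ`). The mass of `θ₀` arriving in the `γ`-part of `β + γ` is relayed along
`K`, lands again partly in `β` and partly in `γ`, and so on. The mass absorbed into `β` over all
rounds couples `α` with `β`; by the triangle inequality each relay costs at most the part of `ρ`
it uses, and since the relayed masses add up to at most `γ X`, nothing is left over in the limit.
-/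

open MeasureTheory

/-- The 1-Wasserstein distance between two finite positive measures of equal total mass,
defined as the infimum of transport costs over couplings. -/
noncomputable def W1 {X : Type*} [MetricSpace X] [MeasurableSpace X]
    (α β : Measure X) : ℝ :=
  sInf {c : ℝ | ∃ π : Measure (X × X),
    π.map Prod.fst = α ∧ π.map Prod.snd = β ∧ c = ∫ p, dist p.1 p.2 ∂π}

open ProbabilityTheory Filter Topology Set
open scoped ENNReal

namespace MeasureTheory.Measure

variable {Y : Type*} [MeasurableSpace Y]

lemma eq_of_add_eq_add_left {μ ν ν' : Measure Y} [IsFiniteMeasure μ] (h : μ + ν = μ + ν') :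
    ν = ν' :=
  le_antisymm (le_of_add_le_add_left h.le) (le_of_add_le_add_left h.ge)

lemma withDensity_le_self_of_le_one {μ : Measure Y} {f : Y → ℝ≥0∞} (hf : f ≤ 1) :
    μ.withDensity f ≤ μ := by
  simpa using withDensity_mono (μ := μ) (ae_of_all _ hf)

lemma withDensity_mono_measure {μ ν : Measure Y} (h : μ ≤ ν) (f : Y → ℝ≥0∞) :
    μ.withDensity f ≤ ν.withDensity f :=
  le_iff.2 fun s hs => by
    rw [withDensity_apply _ hs, withDensity_apply _ hs]
    exact lintegral_mono' (restrict_mono subset_rfl h) le_rfl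

lemma withDensity_add_withDensity_one_sub {f : Y → ℝ≥0∞} (hf : Measurable f) (hf1 : f ≤ 1)
    (μ : Measure Y) : μ.withDensity f + μ.withDensity (1 - f) = μ := by
  rw [← withDensity_add_left hf, add_tsub_cancel_of_le hf1, withDensity_one]

lemma exists_withDensity_eq_and_one_sub (α γ : Measure Y) [IsFiniteMeasure α]
    [IsFiniteMeasure γ] : ∃ f : Y → ℝ≥0∞, Measurable f ∧ f ≤ 1 ∧
      (α + γ).withDensity f = α ∧ (α + γ).withDensity (1 - f) = γ := by
  have hα : α ≤ α + γ := Measure.le_add_right le_rfl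
  set f : Y → ℝ≥0∞ := fun x => min (α.rnDeriv (α + γ) x) 1
  have hf : Measurable f := (measurable_rnDeriv _ _).min measurable_const
  have hf1 : f ≤ 1 := fun x => min_le_right _ _
  have hfα : (α + γ).withDensity f = α := by
    have hae : α.rnDeriv (α + γ) =ᵐ[α + γ] f := by
      filter_upwards [rnDeriv_le_one_of_le hα] with x hx
      exact (min_eq_left hx).symm
    rw [← withDensity_congr_ae hae,
      withDensity_rnDeriv_eq _ _ (absolutelyContinuous_of_le hα)]
  refine ⟨f, hf, hf1, hfα, eq_of_add_eq_add_left (μ := α) ?_⟩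
  have h := withDensity_add_withDensity_one_sub hf hf1 (α + γ)
  rwa [hfα] at h

lemma map_withDensity_comp {Z : Type*} [MeasurableSpace Z] {φ : Y → Z} (hφ : Measurable φ)
    {f : Z → ℝ≥0∞} (hf : Measurable f) (m : Measure Y) :
    (m.withDensity (f ∘ φ)).map φ = (m.map φ).withDensity f := by
  ext s hs
  rw [map_apply hφ hs, withDensity_apply _ (hφ hs), withDensity_apply _ hs,
    setLIntegral_map hs hf hφ]
  rfl

lemma sum_eq_of_sum_range_add_eq {μ r : ℕ → Measure Y} {ν : Measure Y}
    (h : ∀ N, ∑ n ∈ Finset.range N, μ n + r N = ν)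
    (hr : Tendsto (fun N => r N univ) atTop (𝓝 0)) : Measure.sum μ = ν := by
  ext s hs
  have hrs : Tendsto (fun N => r N s) atTop (𝓝 0) :=
    tendsto_of_tendsto_of_tendsto_of_le_of_le tendsto_const_nhds hr (fun _ => zero_le)
      fun _ => measure_mono (subset_univ s)
  have hlim := (ENNReal.tendsto_nat_tsum fun n => μ n s).add hrs
  rw [add_zero] at hlim
  rw [sum_apply _ hs]
  refine tendsto_nhds_unique hlim (tendsto_const_nhds.congr fun N => ?_)
  rw [← h N, add_apply, finsetSum_apply]

lemma sum_le_of_sum_range_le {μ : ℕ → Measure Y} {ν : Measure Y}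
    (h : ∀ N, ∑ n ∈ Finset.range N, μ n ≤ ν) : Measure.sum μ ≤ ν :=
  le_iff.2 fun s hs => by
    rw [sum_apply _ hs]
    exact ENNReal.tsum_le_of_sum_range_le fun N => by
      simpa only [finsetSum_apply] using le_iff'.1 (h N) s

lemma finsetSum_withDensity {ι : Type*} (s : Finset ι) (μ : ι → Measure Y) (f : Y → ℝ≥0∞) :
    (∑ i ∈ s, μ i).withDensity f = ∑ i ∈ s, (μ i).withDensity f := by
  induction s using Finset.cons_induction with
  | empty => simp
  | cons i s hi ih => rw [Finset.sum_cons, Finset.sum_cons, withDensity_add_measure, ih]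

lemma comp_mono {Z : Type*} [MeasurableSpace Z] {K : Kernel Y Z} {μ ν : Measure Y} (h : μ ≤ ν) :
    K ∘ₘ μ ≤ K ∘ₘ ν :=
  le_iff.2 fun s hs => by
    rw [bind_apply hs K.aemeasurable, bind_apply hs K.aemeasurable]
    exact lintegral_mono' h le_rfl

lemma exists_coupling_of_measure_univ_eq {Z : Type*} [MeasurableSpace Z] (α : Measure Y)
    (β : Measure Z) [IsFiniteMeasure α] [IsFiniteMeasure β] (h : α univ = β univ) :
    ∃ π : Measure (Y × Z), π.map Prod.fst = α ∧ π.map Prod.snd = β := by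
  rcases eq_or_ne (α univ) 0 with h0 | h0
  · refine ⟨0, ?_, ?_⟩
    · simp [measure_univ_eq_zero.mp h0]
    · simp [measure_univ_eq_zero.mp (h ▸ h0)]
  · refine ⟨(α univ)⁻¹ • α.prod β, ?_, ?_⟩
    · rw [Measure.map_smul, map_fst_prod, ← h, smul_smul,
        ENNReal.inv_mul_cancel h0 (measure_ne_top α _), one_smul]
    · rw [Measure.map_smul, map_snd_prod, smul_smul,
        ENNReal.inv_mul_cancel h0 (measure_ne_top α _), one_smul]

variable {W X Z : Type*} [MeasurableSpace W] [MeasurableSpace X] [MeasurableSpace Z]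

/-- `m.compSnd K` moves the second coordinate of `m` along `K`: it is the law of `(x, z)`
where `(x, y) ∼ m` and `z ∼ K y`. -/
noncomputable def compSnd (m : Measure (W × X)) (K : Kernel X Z) : Measure (W × Z) :=
  (m ⊗ₘ K.comap Prod.snd measurable_snd).map fun q => (q.1.1, q.2)

instance (m : Measure (W × X)) (K : Kernel X Z) : SFinite (m.compSnd K) := by
  rw [compSnd]; infer_instance

lemma map_fst_compSnd {K : Kernel X Z} [IsMarkovKernel K] (m : Measure (W × X)) [SFinite m] :
    (m.compSnd K).map Prod.fst = m.map Prod.fst := by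
  rw [compSnd, map_map measurable_fst (measurable_fst.fst.prodMk measurable_snd)]
  change (m ⊗ₘ _).map (Prod.fst ∘ Prod.fst) = _
  rw [← map_map measurable_fst measurable_fst]
  exact congrArg (map Prod.fst) (fst_compProd m _)

lemma map_snd_compSnd {K : Kernel X Z} [IsSFiniteKernel K] (m : Measure (W × X)) [SFinite m] :
    (m.compSnd K).map Prod.snd = K ∘ₘ m.map Prod.snd := by
  rw [compSnd, map_map measurable_snd (measurable_fst.fst.prodMk measurable_snd)]
  change (m ⊗ₘ _).snd = _
  rw [snd_compProd, ← Kernel.comp_deterministic_eq_comap, ← comp_assoc,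
    deterministic_comp_eq_map]

lemma lintegral_compSnd_le {K : Kernel X X} [IsMarkovKernel K] {c : X → X → ℝ≥0∞}
    (hc : Measurable (Function.uncurry c)) (htri : ∀ x y z, c x z ≤ c x y + c y z)
    (m : Measure (X × X)) [SFinite m] :
    ∫⁻ p, c p.1 p.2 ∂(m.compSnd K) ≤
      ∫⁻ p, c p.1 p.2 ∂m + ∫⁻ y, ∫⁻ z, c y z ∂K y ∂(m.map Prod.snd) := by
  have hc' : Measurable fun p : X × X => c p.1 p.2 := hc
  have hF : Measurable fun y => ∫⁻ z, c y z ∂K y := hc.lintegral_kernel_prod_right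
  have hG : Measurable fun q : (X × X) × X => (q.1.1, q.2) :=
    measurable_fst.fst.prodMk measurable_snd
  calc ∫⁻ p, c p.1 p.2 ∂(m.compSnd K)
      = ∫⁻ p, ∫⁻ z, c p.1 z ∂K p.2 ∂m := by
        rw [compSnd, lintegral_map hc' hG,
          lintegral_compProd (f := fun q : (X × X) × X => c q.1.1 q.2) (hc'.comp hG)]
        rfl
    _ ≤ ∫⁻ p, (c p.1 p.2 + ∫⁻ z, c p.2 z ∂K p.2) ∂m := by
        refine lintegral_mono fun p => ?_
        calc ∫⁻ z, c p.1 z ∂K p.2 ≤ ∫⁻ z, (c p.1 p.2 + c p.2 z) ∂K p.2 :=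
              lintegral_mono fun z => htri _ _ _
          _ = c p.1 p.2 + ∫⁻ z, c p.2 z ∂K p.2 := by
              rw [lintegral_add_left measurable_const, lintegral_const, measure_univ, mul_one]
    _ = ∫⁻ p, c p.1 p.2 ∂m + ∫⁻ y, ∫⁻ z, c y z ∂K y ∂(m.map Prod.snd) := by
        rw [lintegral_add_left hc', lintegral_map hF measurable_snd]

end MeasureTheory.Measure

namespace MeasureTheory

variable {X : Type*} [MeasurableSpace X]

/-- In round `n + 1`, the fraction `1 - g y` of the mass of round `n` sitting over an endpoint `y`
has its endpoint moved along `K`; the remaining fraction `g y` is absorbed. -/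
noncomputable def transportChain (K : Kernel X X) (g : X → ℝ≥0∞) (θ₀ : Measure (X × X)) :
    ℕ → Measure (X × X)
  | 0 => θ₀
  | n + 1 => ((transportChain K g θ₀ n).withDensity ((1 - g) ∘ Prod.snd)).compSnd K

namespace transportChain

variable {K : Kernel X X} {g : X → ℝ≥0∞} {θ₀ : Measure (X × X)}

local notation "θ" => transportChain K g θ₀

instance [SFinite θ₀] : ∀ n, SFinite (θ n)
  | 0 => ‹_›
  | _ + 1 => by rw [transportChain]; infer_instance

lemma withDensity_add_withDensity (hg : Measurable g) (hg1 : g ≤ 1) (n : ℕ) :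
    (θ n).withDensity (g ∘ Prod.snd) + (θ n).withDensity ((1 - g) ∘ Prod.snd) = θ n :=
  Measure.withDensity_add_withDensity_one_sub (hg.comp measurable_snd) (fun p => hg1 p.2) _

lemma sum_range_map_fst_add_map_fst [IsMarkovKernel K] [SFinite θ₀] (hg : Measurable g)
    (hg1 : g ≤ 1) (N : ℕ) :
    ∑ n ∈ Finset.range N, ((θ n).withDensity (g ∘ Prod.snd)).map Prod.fst + (θ N).map Prod.fst =
      θ₀.map Prod.fst := by
  induction N with
  | zero => simp [transportChain]
  | succ N ih =>
    rw [Finset.sum_range_succ, add_assoc, transportChain, Measure.map_fst_compSnd,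
      ← Measure.map_add _ _ measurable_fst, withDensity_add_withDensity hg hg1, ih]

lemma map_snd_succ [IsSFiniteKernel K] [SFinite θ₀] (hg : Measurable g) (n : ℕ) :
    (θ (n + 1)).map Prod.snd = K ∘ₘ ((θ n).map Prod.snd).withDensity (1 - g) := by
  rw [transportChain, Measure.map_snd_compSnd,
    Measure.map_withDensity_comp (f := 1 - g) measurable_snd (measurable_const.sub hg)]

lemma sum_range_succ_map_snd [IsSFiniteKernel K] [SFinite θ₀] (hg : Measurable g) (N : ℕ) :
    ∑ n ∈ Finset.range (N + 1), (θ n).map Prod.snd =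
      θ₀.map Prod.snd + K ∘ₘ (∑ n ∈ Finset.range N, (θ n).map Prod.snd).withDensity (1 - g) := by
  induction N with
  | zero => simp [transportChain]
  | succ N ih =>
    conv_rhs =>
      rw [Finset.sum_range_succ, withDensity_add_measure, Measure.comp_add, ← add_assoc]
    rw [Finset.sum_range_succ _ (N + 1), ih, map_snd_succ hg]

lemma sum_range_map_snd_le [IsSFiniteKernel K] [SFinite θ₀] (hg : Measurable g)
    {β γ : Measure X} (hsnd : θ₀.map Prod.snd + K ∘ₘ γ = β + γ)
    (hγ : (β + γ).withDensity (1 - g) = γ) (N : ℕ) :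
    ∑ n ∈ Finset.range N, (θ n).map Prod.snd ≤ β + γ := by
  induction N with
  | zero => exact Measure.zero_le _
  | succ N ih =>
    rw [sum_range_succ_map_snd hg, ← hsnd]
    gcongr
    exact hγ ▸ Measure.comp_mono (Measure.withDensity_mono_measure ih _)

lemma sum_range_withDensity_map_snd_le [IsSFiniteKernel K] [SFinite θ₀] (hg : Measurable g)
    {β γ : Measure X} (hsnd : θ₀.map Prod.snd + K ∘ₘ γ = β + γ)
    (hγ : (β + γ).withDensity (1 - g) = γ) (N : ℕ) :
    ∑ n ∈ Finset.range N, ((θ n).map Prod.snd).withDensity (1 - g) ≤ γ := by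
  rw [← Measure.finsetSum_withDensity, ← hγ]
  exact Measure.withDensity_mono_measure (sum_range_map_snd_le hg hsnd hγ N) _

lemma tendsto_measure_univ [IsMarkovKernel K] [SFinite θ₀] (hg : Measurable g)
    {β γ : Measure X} [IsFiniteMeasure γ] (hsnd : θ₀.map Prod.snd + K ∘ₘ γ = β + γ)
    (hγ : (β + γ).withDensity (1 - g) = γ) :
    Tendsto (fun N => θ N univ) atTop (𝓝 0) := by
  have hsucc (n : ℕ) : θ (n + 1) univ = ((θ n).map Prod.snd).withDensity (1 - g) univ := by
    rw [← Measure.comp_apply_univ (κ := K), ← map_snd_succ hg,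
      Measure.map_apply measurable_snd .univ, preimage_univ]
  refine (tendsto_add_atTop_iff_nat 1).1 ?_
  simp_rw [hsucc]
  refine ENNReal.tendsto_atTop_zero_of_tsum_ne_top (ne_top_of_le_ne_top (measure_ne_top γ univ)
    (ENNReal.tsum_le_of_sum_range_le fun N => ?_))
  rw [← Measure.finsetSum_apply]
  exact Measure.le_iff'.1 (sum_range_withDensity_map_snd_le hg hsnd hγ N) univ

lemma sum_range_lintegral_add_lintegral_le [IsMarkovKernel K] [SFinite θ₀] (hg : Measurable g)
    (hg1 : g ≤ 1) {c : X → X → ℝ≥0∞} (hc : Measurable (Function.uncurry c))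
    (htri : ∀ x y z, c x z ≤ c x y + c y z) (N : ℕ) :
    ∑ n ∈ Finset.range N, ∫⁻ p, c p.1 p.2 ∂(θ n).withDensity (g ∘ Prod.snd) +
        ∫⁻ p, c p.1 p.2 ∂(θ N) ≤
      ∫⁻ p, c p.1 p.2 ∂θ₀ + ∑ n ∈ Finset.range N,
        ∫⁻ y, ∫⁻ z, c y z ∂K y ∂((θ n).map Prod.snd).withDensity (1 - g) := by
  induction N with
  | zero => simp [transportChain]
  | succ N ih =>
    have hstep : ∫⁻ p, c p.1 p.2 ∂(θ (N + 1)) ≤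
        ∫⁻ p, c p.1 p.2 ∂(θ N).withDensity ((1 - g) ∘ Prod.snd) +
          ∫⁻ y, ∫⁻ z, c y z ∂K y ∂((θ N).map Prod.snd).withDensity (1 - g) := by
      rw [← Measure.map_withDensity_comp (f := 1 - g) measurable_snd (measurable_const.sub hg)]
      exact Measure.lintegral_compSnd_le hc htri _
    calc _ ≤ ∑ n ∈ Finset.range N, ∫⁻ p, c p.1 p.2 ∂(θ n).withDensity (g ∘ Prod.snd) +
          (∫⁻ p, c p.1 p.2 ∂(θ N).withDensity (g ∘ Prod.snd) +
            (∫⁻ p, c p.1 p.2 ∂(θ N).withDensity ((1 - g) ∘ Prod.snd) +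
              ∫⁻ y, ∫⁻ z, c y z ∂K y ∂((θ N).map Prod.snd).withDensity (1 - g))) := by
          rw [Finset.sum_range_succ, add_assoc]
          gcongr
      _ = (∑ n ∈ Finset.range N, ∫⁻ p, c p.1 p.2 ∂(θ n).withDensity (g ∘ Prod.snd) +
            ∫⁻ p, c p.1 p.2 ∂(θ N)) +
              ∫⁻ y, ∫⁻ z, c y z ∂K y ∂((θ N).map Prod.snd).withDensity (1 - g) := by
          rw [← add_assoc (∫⁻ _, _ ∂_), ← lintegral_add_measure,
            withDensity_add_withDensity hg hg1, add_assoc]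
      _ ≤ _ := by
          rw [Finset.sum_range_succ, ← add_assoc]
          gcongr

theorem exists_coupling [IsMarkovKernel K] [IsFiniteMeasure θ₀] (hg : Measurable g)
    (hg1 : g ≤ 1) {β γ : Measure X} [IsFiniteMeasure β] [IsFiniteMeasure γ]
    (hsnd : θ₀.map Prod.snd + K ∘ₘ γ = β + γ) (hβ : (β + γ).withDensity g = β)
    (hγ : (β + γ).withDensity (1 - g) = γ) {c : X → X → ℝ≥0∞}
    (hc : Measurable (Function.uncurry c)) (htri : ∀ x y z, c x z ≤ c x y + c y z) :
    ∃ π : Measure (X × X), π.map Prod.fst = θ₀.map Prod.fst ∧ π.map Prod.snd = β ∧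
      ∫⁻ p, c p.1 p.2 ∂π ≤ ∫⁻ p, c p.1 p.2 ∂θ₀ + ∫⁻ y, ∫⁻ z, c y z ∂K y ∂γ := by
  set π := Measure.sum fun n => (θ n).withDensity (g ∘ Prod.snd)
  have hfst : π.map Prod.fst = θ₀.map Prod.fst := by
    rw [Measure.map_sum measurable_fst.aemeasurable]
    refine Measure.sum_eq_of_sum_range_add_eq (sum_range_map_fst_add_map_fst hg hg1) ?_
    simpa only [Measure.map_apply measurable_fst .univ, preimage_univ]
      using tendsto_measure_univ hg hsnd hγ
  have hsnd_le : π.map Prod.snd ≤ β := by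
    rw [Measure.map_sum measurable_snd.aemeasurable]
    refine Measure.sum_le_of_sum_range_le fun N => ?_
    simp_rw [Measure.map_withDensity_comp measurable_snd hg]
    rw [← Measure.finsetSum_withDensity, ← hβ]
    exact Measure.withDensity_mono_measure (sum_range_map_snd_le hg hsnd hγ N) _
  -- the second marginal is only bounded by `β` directly; equality follows from the total masses
  have hmass : (π.map Prod.snd) univ = β univ := by
    have h := congrArg (· univ) hsnd
    simp only [Measure.add_apply, Measure.comp_apply_univ] at h
    have hπ := congrArg (· univ) hfst
    simp only [Measure.map_apply measurable_fst .univ, Measure.map_apply measurable_snd .univ,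
      preimage_univ] at h hπ ⊢
    rw [← ENNReal.add_left_inj (measure_ne_top γ univ), ← h, hπ]
  refine ⟨π, hfst, ?_, ?_⟩
  · have := isFiniteMeasure_of_le β hsnd_le
    exact Measure.eq_of_le_of_measure_univ_eq hsnd_le hmass
  · rw [lintegral_sum_measure]
    refine ENNReal.tsum_le_of_sum_range_le fun N => ?_
    calc _ ≤ _ := le_self_add
      _ ≤ _ := sum_range_lintegral_add_lintegral_le hg hg1 hc htri N
      _ = ∫⁻ p, c p.1 p.2 ∂θ₀ + ∫⁻ y, ∫⁻ z, c y z ∂K y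
            ∂(∑ n ∈ Finset.range N, ((θ n).map Prod.snd).withDensity (1 - g)) := by
          rw [lintegral_finsetSum_measure]
      _ ≤ _ := by
          gcongr
          exact sum_range_withDensity_map_snd_le hg hsnd hγ N

end transportChain

theorem exists_coupling_lintegral_le_of_add [StandardBorelSpace X] [Nonempty X]
    {α β γ : Measure X} [IsFiniteMeasure α] [IsFiniteMeasure β] [IsFiniteMeasure γ]
    {c : X → X → ℝ≥0∞} (hc : Measurable (Function.uncurry c))
    (htri : ∀ x y z, c x z ≤ c x y + c y z) (π : Measure (X × X))
    (hπ₁ : π.map Prod.fst = α + γ) (hπ₂ : π.map Prod.snd = β + γ) :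
    ∃ π' : Measure (X × X), π'.map Prod.fst = α ∧ π'.map Prod.snd = β ∧
      ∫⁻ p, c p.1 p.2 ∂π' ≤ ∫⁻ p, c p.1 p.2 ∂π := by
  have : IsFiniteMeasure π := ⟨by
    rw [← preimage_univ (f := Prod.fst), ← Measure.map_apply measurable_fst .univ, hπ₁]
    exact measure_lt_top _ _⟩
  obtain ⟨f, hf, hf1, hfα, hfγ⟩ := Measure.exists_withDensity_eq_and_one_sub α γ
  obtain ⟨g, hg, hg1, hgβ, hgγ⟩ := Measure.exists_withDensity_eq_and_one_sub β γ
  set θ₀ := π.withDensity (f ∘ Prod.fst)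
  set ρ := π.withDensity ((1 - f) ∘ Prod.fst)
  have : IsFiniteMeasure θ₀ :=
    isFiniteMeasure_of_le π (Measure.withDensity_le_self_of_le_one fun p => hf1 p.1)
  have : IsFiniteMeasure ρ :=
    isFiniteMeasure_of_le π (Measure.withDensity_le_self_of_le_one fun p => tsub_le_self)
  have hsplit : θ₀ + ρ = π :=
    Measure.withDensity_add_withDensity_one_sub (hf.comp measurable_fst) (fun p => hf1 p.1) π
  have hθ₀ : θ₀.map Prod.fst = α := by
    rw [Measure.map_withDensity_comp measurable_fst hf, hπ₁, hfα]
  have hρ : γ ⊗ₘ ρ.condKernel = ρ := by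
    have hρfst : ρ.fst = γ := by
      rw [Measure.fst, Measure.map_withDensity_comp (f := 1 - f) measurable_fst
        (measurable_const.sub hf), hπ₁, hfγ]
    exact hρfst ▸ ρ.disintegrate ρ.condKernel
  have hsnd : θ₀.map Prod.snd + ρ.condKernel ∘ₘ γ = β + γ := by
    rw [← Measure.snd_compProd, hρ, Measure.snd, ← Measure.map_add _ _ measurable_snd, hsplit,
      hπ₂]
  obtain ⟨π', h₁, h₂, hcost⟩ := transportChain.exists_coupling hg hg1 hsnd hgβ hgγ hc htri
  refine ⟨π', h₁.trans hθ₀, h₂, hcost.trans_eq ?_⟩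
  rw [← Measure.lintegral_compProd (f := fun p => c p.1 p.2) hc, hρ, ← lintegral_add_measure,
    hsplit]

end MeasureTheory

section W1

variable {X : Type*} [MetricSpace X] [MeasurableSpace X]

lemma W1_le_integral {α β : Measure X} (π : Measure (X × X)) (h₁ : π.map Prod.fst = α)
    (h₂ : π.map Prod.snd = β) : W1 α β ≤ ∫ p, dist p.1 p.2 ∂π :=
  csInf_le ⟨0, by rintro _ ⟨π, -, -, rfl⟩; exact integral_nonneg fun _ => dist_nonneg⟩
    ⟨π, h₁, h₂, rfl⟩

variable [BorelSpace X] [SecondCountableTopology X]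

lemma integral_dist_eq_toReal_lintegral_edist (π : Measure (X × X)) :
    ∫ p, dist p.1 p.2 ∂π = (∫⁻ p, edist p.1 p.2 ∂π).toReal := by
  simp_rw [edist_dist]
  exact integral_eq_lintegral_of_nonneg_ae (ae_of_all _ fun _ => dist_nonneg)
    continuous_dist.aestronglyMeasurable

lemma lintegral_edist_ne_top_of_map {π : Measure (X × X)} {α β : Measure X} {x₀ : X}
    (h₁ : π.map Prod.fst = α) (h₂ : π.map Prod.snd = β)
    (hα : Integrable (fun x => dist x x₀) α) (hβ : Integrable (fun x => dist x x₀) β) :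
    ∫⁻ p, edist p.1 p.2 ∂π ≠ ⊤ := by
  have hd : Continuous fun x : X => dist x x₀ := continuous_id.dist continuous_const
  have i₁ : Integrable (fun p : X × X => dist p.1 x₀) π := by
    rw [← h₁] at hα
    exact (integrable_map_measure hd.aestronglyMeasurable measurable_fst.aemeasurable).mp hα
  have i₂ : Integrable (fun p : X × X => dist p.2 x₀) π := by
    rw [← h₂] at hβ
    exact (integrable_map_measure hd.aestronglyMeasurable measurable_snd.aemeasurable).mp hβ
  have hint : Integrable (fun p : X × X => dist p.1 p.2) π :=
    (i₁.add i₂).mono' continuous_dist.aestronglyMeasurable (ae_of_all _ fun p => by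
      rw [Real.norm_of_nonneg dist_nonneg]
      exact dist_triangle_right _ _ _)
  simpa only [edist_dist] using hint.lintegral_lt_top.ne

lemma W1_add_le (α β γ : Measure X) [IsFiniteMeasure α] [IsFiniteMeasure β]
    (hmass : α univ = β univ) : W1 (α + γ) (β + γ) ≤ W1 α β := by
  obtain ⟨π₀, h₁, h₂⟩ := Measure.exists_coupling_of_measure_univ_eq α β hmass
  refine csInf_le_csInf ⟨0, ?_⟩ ⟨_, π₀, h₁, h₂, rfl⟩ ?_
  · rintro _ ⟨π, -, -, rfl⟩
    exact integral_nonneg fun _ => dist_nonneg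
  rintro _ ⟨π, h₁, h₂, rfl⟩
  have hdiag : Measurable fun x : X => (x, x) := measurable_id.prodMk measurable_id
  refine ⟨π + γ.map fun x => (x, x), ?_, ?_, ?_⟩
  · rw [Measure.map_add _ _ measurable_fst, h₁, Measure.map_map measurable_fst hdiag]
    exact congrArg _ Measure.map_id
  · rw [Measure.map_add _ _ measurable_snd, h₂, Measure.map_map measurable_snd hdiag]
    exact congrArg _ Measure.map_id
  · rw [integral_dist_eq_toReal_lintegral_edist, integral_dist_eq_toReal_lintegral_edist,
      lintegral_add_measure, lintegral_map measurable_edist hdiag]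
    simp

lemma W1_le_W1_add [StandardBorelSpace X] (α β γ : Measure X) [IsFiniteMeasure α]
    [IsFiniteMeasure β] [IsFiniteMeasure γ] {x₀ : X} (hα : Integrable (fun x => dist x x₀) α)
    (hβ : Integrable (fun x => dist x x₀) β) (hγ : Integrable (fun x => dist x x₀) γ)
    (hmass : α univ = β univ) : W1 α β ≤ W1 (α + γ) (β + γ) := by
  have : Nonempty X := ⟨x₀⟩
  obtain ⟨π₀, h₁, h₂⟩ :=
    Measure.exists_coupling_of_measure_univ_eq (α + γ) (β + γ) (by simp [hmass])
  refine le_csInf ⟨_, π₀, h₁, h₂, rfl⟩ ?_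
  rintro _ ⟨π, h₁, h₂, rfl⟩
  obtain ⟨π', h₁', h₂', hle⟩ :=
    exists_coupling_lintegral_le_of_add measurable_edist edist_triangle π h₁ h₂
  calc W1 α β ≤ ∫ p, dist p.1 p.2 ∂π' := W1_le_integral π' h₁' h₂'
    _ ≤ ∫ p, dist p.1 p.2 ∂π := by
      rw [integral_dist_eq_toReal_lintegral_edist, integral_dist_eq_toReal_lintegral_edist]
      exact ENNReal.toReal_mono
        (lintegral_edist_ne_top_of_map h₁ h₂ (hα.add_measure hγ) (hβ.add_measure hγ)) hle

lemma W1_add_eq [StandardBorelSpace X] (α β γ : Measure X) [IsFiniteMeasure α]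
    [IsFiniteMeasure β] [IsFiniteMeasure γ] {x₀ : X} (hα : Integrable (fun x => dist x x₀) α)
    (hβ : Integrable (fun x => dist x x₀) β) (hγ : Integrable (fun x => dist x x₀) γ)
    (hmass : α univ = β univ) : W1 (α + γ) (β + γ) = W1 α β :=
  (W1_add_le α β γ hmass).antisymm (W1_le_W1_add α β γ hα hβ hγ hmass)

end W1

/-- for finite signed measures `μ, ν` with total mass 1 and finite first
moment on a Polish space, the quantity `W₁(μ⁺+ν⁻, μ⁻+ν⁺)` does not depend on the chosen
decompositions `μ = μ⁺ − μ⁻`, `ν = ν⁺ − ν⁻` into finite positive measures with finite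
first moments.  The equality of signed measures `μ⁺ − μ⁻ = μ⁺' − μ⁻'` is encoded as
`μ⁺ + μ⁻' = μ⁺' + μ⁻`. -/
theorem wasserstein_signed_well_defined
    {X : Type*} [MetricSpace X] [CompleteSpace X] [TopologicalSpace.SeparableSpace X]
    [MeasurableSpace X] [BorelSpace X]
    (μp μm νp νm μp' μm' νp' νm' : Measure X)
    [IsFiniteMeasure μp] [IsFiniteMeasure μm] [IsFiniteMeasure νp] [IsFiniteMeasure νm]
    [IsFiniteMeasure μp'] [IsFiniteMeasure μm'] [IsFiniteMeasure νp'] [IsFiniteMeasure νm']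
    (hμ : μp + μm' = μp' + μm)
    (hν : νp + νm' = νp' + νm)
    (hμmass : μp Set.univ = μm Set.univ + 1)
    (hνmass : νp Set.univ = νm Set.univ + 1)
    (hμmass' : μp' Set.univ = μm' Set.univ + 1)
    (hνmass' : νp' Set.univ = νm' Set.univ + 1)
    (hmom1 : ∀ x0 : X, Integrable (fun x => dist x x0) μp)
    (hmom2 : ∀ x0 : X, Integrable (fun x => dist x x0) μm)
    (hmom3 : ∀ x0 : X, Integrable (fun x => dist x x0) νp)
    (hmom4 : ∀ x0 : X, Integrable (fun x => dist x x0) νm)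
    (hmom5 : ∀ x0 : X, Integrable (fun x => dist x x0) μp')
    (hmom6 : ∀ x0 : X, Integrable (fun x => dist x x0) μm')
    (hmom7 : ∀ x0 : X, Integrable (fun x => dist x x0) νp')
    (hmom8 : ∀ x0 : X, Integrable (fun x => dist x x0) νm') :
    W1 (μp + νm) (μm + νp) = W1 (μp' + νm') (μm' + νp') := by
  obtain ⟨x₀⟩ : Nonempty X := by
    by_contra hX
    simp [univ_eq_empty_iff.mpr (not_nonempty_iff.mp hX)] at hμmass
  have : SecondCountableTopology X := UniformSpace.secondCountable_of_separable X
  have hmass : (μp + νm) univ = (μm + νp) univ := by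
    simp only [Measure.add_apply, hμmass, hνmass]; ring
  have hmass' : (μp' + νm') univ = (μm' + νp') univ := by
    simp only [Measure.add_apply, hμmass', hνmass']; ring
  have hsum : (μp + νm) + (μm' + νp') = (μp' + νm') + (μm + νp) :=
    calc _ = (μp + μm') + (νp' + νm) := by abel
      _ = (μp' + μm) + (νp + νm') := by rw [hμ, hν]
      _ = _ := by abel
  calc W1 (μp + νm) (μm + νp)
      = W1 ((μp + νm) + (μm' + νp')) ((μm + νp) + (μm' + νp')) :=
        (W1_add_eq _ _ _ ((hmom1 x₀).add_measure (hmom4 x₀))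
          ((hmom2 x₀).add_measure (hmom3 x₀)) ((hmom6 x₀).add_measure (hmom7 x₀)) hmass).symm
    _ = W1 ((μp' + νm') + (μm + νp)) ((μm' + νp') + (μm + νp)) := by
        rw [hsum, add_comm (μm + νp)]
    _ = W1 (μp' + νm') (μm' + νp') :=
        W1_add_eq _ _ _ ((hmom5 x₀).add_measure (hmom8 x₀))
          ((hmom6 x₀).add_measure (hmom7 x₀)) ((hmom2 x₀).add_measure (hmom3 x₀)) hmass'
end

section
/- Let μ₁, ..., μ_m be finitely supported probability measures on ℝ that are non-decreasing in convex order and all have mean 1. Then there exists a probability measure μ on ℝᵐ with marginals μ₁, ..., μ_m under which the coordinate process (M₁, ..., M_m) is a martingale, i.e., E^μ[M_{i+1} | M₁,...,M_i] = M_i for all i and E^μ[M₁] = 1. -/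
/-!
For two consecutive marginals `μ ≤ ν` in convex order with finite supports, a martingale kernel
(a stochastic matrix carrying `μ` to `ν` whose rows have the atoms of `μ` as barycentres) exists:
stochastic matrices form a compact convex set, and if the pair (`ν`, barycentres of `μ`) were
not in its image under the linear map "second marginal and row barycentres", a separating
functional would produce finitely many affine functions whose maximum `f`, a convex function of
linear growth, has `∫ f dμ > ∫ f dν`. Chaining these kernels gives a Markov chain whose law on
`ℝᵐ` has the prescribed marginals, and it is a martingale because every step preserves the
current position on average.
-/

open MeasureTheory Finset Function

section AtomicMeasure

variable {ι α : Type*} [MeasurableSpace α]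

noncomputable def atomicMeasure (s : Finset ι) (w : ι → ℝ) (e : ι → α) : Measure α :=
  ∑ i ∈ s, ENNReal.ofReal (w i) • Measure.dirac (e i)

lemma atomicMeasure_coe_sort (s : Finset α) (w : α → ℝ) :
    atomicMeasure (univ : Finset s) (fun x => w x) (↑) = atomicMeasure s w id :=
  sum_coe_sort s fun x => ENNReal.ofReal (w x) • Measure.dirac x

variable {s : Finset ι} {w : ι → ℝ} {e : ι → α}

instance : IsFiniteMeasure (atomicMeasure s w e) :=
  ⟨by simp [atomicMeasure, Measure.finsetSum_apply, ENNReal.sum_lt_top]⟩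

variable [MeasurableSingletonClass α]

lemma atomicMeasure_apply (hw : ∀ i ∈ s, 0 ≤ w i) (A : Set α) :
    atomicMeasure s w e A = ENNReal.ofReal (∑ i ∈ s, w i * A.indicator 1 (e i)) := by
  rw [ENNReal.ofReal_sum_of_nonneg fun i hi =>
    mul_nonneg (hw i hi) (Set.indicator_nonneg (by simp) _)]
  simp only [atomicMeasure, Measure.finsetSum_apply, Measure.smul_apply, Measure.dirac_apply,
    smul_eq_mul]
  refine sum_congr rfl fun i hi => ?_
  rw [ENNReal.ofReal_mul (hw i hi)]
  by_cases h : e i ∈ A <;> simp [h]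

lemma integrable_atomicMeasure (f : α → ℝ) : Integrable f (atomicMeasure s w e) :=
  integrable_finsetSum_measure.2 fun _ _ =>
    (integrable_dirac enorm_lt_top).smul_measure ENNReal.ofReal_ne_top

lemma integral_atomicMeasure (hw : ∀ i ∈ s, 0 ≤ w i) (f : α → ℝ) :
    ∫ x, f x ∂atomicMeasure s w e = ∑ i ∈ s, w i * f (e i) := by
  rw [atomicMeasure, integral_finsetSum_measure fun _ _ =>
    (integrable_dirac enorm_lt_top).smul_measure ENNReal.ofReal_ne_top]
  refine sum_congr rfl fun i hi => ?_
  rw [integral_smul_measure, integral_dirac, ENNReal.toReal_ofReal (hw i hi), smul_eq_mul]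

lemma eq_atomicMeasure_of_measure_compl_eq_zero (ρ : Measure α) [IsFiniteMeasure ρ]
    {s : Finset α} (h : ρ sᶜ = 0) :
    ρ = atomicMeasure {x ∈ s | ρ.real {x} ≠ 0} (fun x => ρ.real {x}) id := by
  classical
  ext A -
  rw [atomicMeasure_apply (fun _ _ => measureReal_nonneg), ← ofReal_measureReal,
    sum_filter_of_ne fun _ _ hx => left_ne_zero_of_mul hx]
  congr 1
  calc ρ.real A = ρ.real (A ∩ s) := by
        rw [measureReal_def, measureReal_def, measure_inter_conull h]
    _ = ρ.real ↑({x ∈ s | x ∈ A}) := by congr 1; ext; simp [and_comm]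
    _ = ∑ x ∈ s with x ∈ A, ρ.real {x} := (sum_measureReal_singleton _).symm
    _ = _ := by rw [sum_filter]; simp [Set.indicator_apply]

end AtomicMeasure

def ConvexOrderLE (μ ν : Measure ℝ) : Prop :=
  ∀ f : ℝ → ℝ, ConvexOn ℝ Set.univ f → (∃ a b : ℝ, ∀ x, |f x| ≤ a * |x| + b) →
    ∫ x, f x ∂μ ≤ ∫ x, f x ∂ν

lemma mem_image_of_forall_exists_dotProduct_le {E ι : Type*} [AddCommGroup E] [Module ℝ E]
    [TopologicalSpace E] [Fintype ι] {K : Set E} (hKconv : Convex ℝ K) (hKcpt : IsCompact K)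
    (L : E →ₗ[ℝ] ι → ℝ) (hL : Continuous L) (z : ι → ℝ)
    (h : ∀ c : ι → ℝ, ∃ k ∈ K, c ⬝ᵥ L k ≤ c ⬝ᵥ z) : z ∈ L '' K := by
  classical
  by_contra hz
  obtain ⟨φ, u, hφz, hφK⟩ :=
    geometric_hahn_banach_point_closed (hKconv.linear_image L) (hKcpt.image hL).isClosed hz
  have hφ : ∀ v, φ v = (fun i => φ fun j => if i = j then 1 else 0) ⬝ᵥ v := fun v => by
    rw [← φ.coe_coe, φ.toLinearMap.pi_apply_eq_sum_univ v, dotProduct]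
    simp [mul_comm]
  obtain ⟨k, hk, hle⟩ := h _
  linarith [hφK _ (Set.mem_image_of_mem L hk), hφ z, hφ (L k)]

section MaxAffine

variable {ι : Type*} (t : Finset ι) (ht : t.Nonempty) (a b : ι → ℝ)

lemma convexOn_univ_finset_sup'_affine :
    ConvexOn ℝ Set.univ fun x => t.sup' ht fun i => a i * x + b i := by
  have hf (i : ι) : ConvexOn ℝ Set.univ fun x => a i * x + b i :=
    ⟨convex_univ, fun x _ y _ s r _ _ hsr => le_of_eq (by
      simp only [smul_eq_mul]; linear_combination (-b i) * hsr)⟩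
  convert Finset.sup'_induction ht _ (fun _ h₁ _ h₂ => h₁.sup h₂) fun i _ => hf i using 1
  ext x
  rw [Finset.sup'_apply]

lemma exists_abs_finset_sup'_affine_le :
    ∃ A B : ℝ, ∀ x, |t.sup' ht fun i => a i * x + b i| ≤ A * |x| + B := by
  refine ⟨∑ i ∈ t, |a i|, ∑ i ∈ t, |b i|, fun x => ?_⟩
  have hbound : ∀ i ∈ t, |a i * x + b i| ≤ (∑ i ∈ t, |a i|) * |x| + ∑ i ∈ t, |b i| :=
    fun i hi => calc
      |a i * x + b i| ≤ |a i| * |x| + |b i| := by rw [← abs_mul]; exact abs_add_le _ _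
      _ ≤ _ := by
        gcongr <;> exact single_le_sum (f := fun i => |_|) (fun _ _ => abs_nonneg _) hi
  obtain ⟨i, hi⟩ := ht
  rw [abs_le]
  exact ⟨(abs_le.1 (hbound i hi)).1.trans (le_sup' (fun i => a i * x + b i) hi),
    sup'_le _ _ fun j hj => (abs_le.1 (hbound j hj)).2⟩

end MaxAffine

lemma exists_sum_le_of_convexOrderLE {α β : Type*} [Fintype α] [Fintype β] [Nonempty α]
    [Nonempty β] {x : α → ℝ} {y : β → ℝ} {p : α → ℝ} {q : β → ℝ}
    (hp : ∀ a, 0 ≤ p a) (hq : ∀ b, 0 ≤ q b)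
    (h : ConvexOrderLE (atomicMeasure univ p x) (atomicMeasure univ q y)) (c : β → ℝ)
    (d : α → ℝ) :
    ∃ b₀ : α → β, ∑ a, p a * (c (b₀ a) + d a * y (b₀ a)) ≤
      ∑ b, q b * c b + ∑ a, d a * (p a * x a) := by
  -- Send each atom `x a` to a minimiser of `b ↦ c b + d a * y b`; the convex-order inequality
  -- for the maximum `f` of the resulting affine minorants pays for this choice.
  choose b₀ hb₀ using fun a => Finite.exists_min fun b => c b + d a * y b
  set m := fun a => c (b₀ a) + d a * y (b₀ a)
  set f := fun t => univ.sup' univ_nonempty fun a => -d a * t + m a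
  have hfx (a : α) : m a - d a * x a ≤ f (x a) := by
    rw [sub_eq_neg_add, ← neg_mul]
    exact le_sup' (fun a' => -d a' * x a + m a') (mem_univ a)
  have hfy (b : β) : f (y b) ≤ c b := sup'_le _ _ fun a _ => by linarith [hb₀ a b]
  have hpf : ∑ a, p a * f (x a) ≤ ∑ b, q b * f (y b) := by
    simpa only [integral_atomicMeasure fun a _ => hp a, integral_atomicMeasure fun b _ => hq b]
      using h f (convexOn_univ_finset_sup'_affine _ _ _ _)
        (exists_abs_finset_sup'_affine_le _ _ _ _)
  refine ⟨b₀, ?_⟩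
  calc ∑ a, p a * m a
      = ∑ a, p a * (m a - d a * x a) + ∑ a, d a * (p a * x a) := by
        rw [← sum_add_distrib]; congr 1; ext a; ring
    _ ≤ ∑ a, p a * f (x a) + ∑ a, d a * (p a * x a) := by
        gcongr with a; exacts [hp a, hfx a]
    _ ≤ ∑ b, q b * c b + ∑ a, d a * (p a * x a) := by
        grw [hpf]; gcongr with b; exacts [hq b, hfy b]

theorem exists_stochastic_matrix_of_convexOrderLE {α β : Type*} [Fintype α] [Fintype β]
    [Nonempty α] [Nonempty β] {x : α → ℝ} {y : β → ℝ} {p : α → ℝ} {q : β → ℝ}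
    (hp : ∀ a, 0 ≤ p a) (hq : ∀ b, 0 ≤ q b)
    (h : ConvexOrderLE (atomicMeasure univ p x) (atomicMeasure univ q y)) :
    ∃ k ∈ Set.univ.pi fun _ : α => stdSimplex ℝ β,
      (∀ b, ∑ a, p a * k a b = q b) ∧ ∀ a, p a * ∑ b, k a b * y b = p a * x a := by
  classical
  let L : (α → β → ℝ) →ₗ[ℝ] β ⊕ α → ℝ :=
    { toFun := fun k => Sum.elim (fun b => ∑ a, p a * k a b) (fun a => p a * ∑ b, k a b * y b)
      map_add' := fun k k' => by
        ext (b | a) <;> simp [sum_add_distrib, mul_add, add_mul]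
      map_smul' := fun r k => by
        ext (b | a) <;> simp [mul_sum, mul_left_comm, mul_assoc] }
  have hL (c : β ⊕ α → ℝ) (k : α → β → ℝ) :
      c ⬝ᵥ L k = ∑ a, p a * ∑ b, k a b * (c (.inl b) + c (.inr a) * y b) := by
    simp only [L, LinearMap.coe_mk, AddHom.coe_mk, dotProduct, Fintype.sum_sum_type,
      Sum.elim_inl, Sum.elim_inr, mul_sum, mul_add, sum_add_distrib]
    rw [sum_comm]
    congr 1 <;> refine sum_congr rfl fun _ _ => sum_congr rfl fun _ _ => by ring
  have hdual (c : β ⊕ α → ℝ) : ∃ k ∈ Set.univ.pi fun _ : α => stdSimplex ℝ β,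
      c ⬝ᵥ L k ≤ c ⬝ᵥ Sum.elim q fun a => p a * x a := by
    obtain ⟨b₀, hb₀⟩ := exists_sum_le_of_convexOrderLE hp hq h (c ∘ .inl) (c ∘ .inr)
    refine ⟨fun a => Pi.single (b₀ a) 1, fun a _ => single_mem_stdSimplex ℝ (b₀ a), ?_⟩
    rw [hL]
    convert hb₀ using 1
    · simp [Pi.single_apply]
    · simp [dotProduct, Fintype.sum_sum_type, mul_comm]
  obtain ⟨k, hk, hLk⟩ := mem_image_of_forall_exists_dotProduct_le
    (convex_pi fun _ _ => convex_stdSimplex ℝ β)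
    (isCompact_univ_pi fun _ => isCompact_stdSimplex ℝ β)
    L (LinearMap.continuous_of_finiteDimensional L) _ hdual
  exact ⟨k, hk, fun b => congrFun hLk (.inl b), fun a => congrFun hLk (.inr a)⟩

structure IsMartingaleKernel (S T : Finset ℝ) (p q : ℝ → ℝ) (k : ℝ → ℝ → ℝ) : Prop where
  nonneg : ∀ x y, 0 ≤ k x y
  sum_eq_one : ∀ x ∈ S, ∑ y ∈ T, k x y = 1
  transport : ∀ y ∈ T, ∑ x ∈ S, p x * k x y = q y
  barycenter : ∀ x ∈ S, ∑ y ∈ T, k x y * y = x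

theorem exists_isMartingaleKernel {S T : Finset ℝ} (hS : S.Nonempty) (hT : T.Nonempty)
    {p q : ℝ → ℝ} (hp : ∀ x ∈ S, 0 < p x) (hq : ∀ y ∈ T, 0 ≤ q y)
    (h : ConvexOrderLE (atomicMeasure S p id) (atomicMeasure T q id)) :
    ∃ k, IsMartingaleKernel S T p q k := by
  have : Nonempty S := hS.coe_sort
  have : Nonempty T := hT.coe_sort
  rw [← atomicMeasure_coe_sort, ← atomicMeasure_coe_sort] at h
  obtain ⟨k, hk, hkq, hkx⟩ := exists_stochastic_matrix_of_convexOrderLE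
    (fun a : S => (hp a a.2).le) (fun b : T => hq b b.2) h
  refine ⟨fun x y => if hx : x ∈ S then if hy : y ∈ T then k ⟨x, hx⟩ ⟨y, hy⟩ else 0 else 0,
    ⟨fun x y => ?_, fun x hx => ?_, fun y hy => ?_, fun x hx => ?_⟩⟩
  · split_ifs with hx hy
    exacts [(hk ⟨x, hx⟩ trivial).1 _, le_rfl, le_rfl]
  · simpa [← sum_coe_sort T, hx] using (hk ⟨x, hx⟩ trivial).2
  · simpa [← sum_coe_sort S, hy] using hkq ⟨y, hy⟩
  · simpa [← sum_coe_sort T, hx, (hp x hx).ne'] using hkx ⟨x, hx⟩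

section Paths

variable {σ : Type*}

def pathWeight (w₀ : σ → ℝ) (K : ℕ → σ → σ → ℝ) (n : ℕ) (x : ℕ → σ) : ℝ :=
  w₀ (x 0) * ∏ i ∈ range n, K i (x i) (x (i + 1))

variable {w₀ : σ → ℝ} {K : ℕ → σ → σ → ℝ} {x : ℕ → σ} {i j n : ℕ}

lemma dependsOn_pathWeight : DependsOn (pathWeight w₀ K n) (Set.Iic n) := fun x y h => by
  rw [pathWeight, pathWeight, h 0 (Nat.zero_le n)]
  refine congrArg _ (prod_congr rfl fun i hi => ?_)
  rw [mem_range] at hi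
  rw [h i (Set.mem_Iic.2 hi.le), h (i + 1) (Set.mem_Iic.2 hi)]

lemma pathWeight_succ_update (y : σ) :
    pathWeight w₀ K (n + 1) (update x (n + 1) y) = pathWeight w₀ K n x * K n (x n) y := by
  rw [pathWeight, prod_range_succ, ← mul_assoc, ← pathWeight,
    dependsOn_pathWeight fun i hi => update_of_ne (by simp at hi; omega) y x,
    update_of_ne (by omega), update_self]

variable [Inhabited σ]

-- Paths with `x i ∈ S i` for `i < n`, padded with `default`: indexing by `ℕ` lets paths of all
-- lengths live in one type.
open scoped Classical in
noncomputable def paths (S : ℕ → Finset σ) : ℕ → Finset (ℕ → σ)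
  | 0 => {fun _ => default}
  | n + 1 => (paths S n ×ˢ S n).image fun z => update z.1 n z.2

variable {S : ℕ → Finset σ}

lemma mem_paths_succ_iff :
    x ∈ paths S (n + 1) ↔ ∃ z ∈ paths S n, ∃ y ∈ S n, update z n y = x := by
  classical
  simp [paths, and_assoc]

lemma apply_mem_of_mem_paths (hx : x ∈ paths S n) (hi : i < n) : x i ∈ S i := by
  induction n generalizing x with
  | zero => omega
  | succ n ih =>
    obtain ⟨z, hz, y, hy, rfl⟩ := mem_paths_succ_iff.1 hx
    rcases eq_or_ne i n with rfl | hin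
    · rwa [update_self]
    · rw [update_of_ne hin]
      exact ih hz (by omega)

lemma apply_eq_default_of_mem_paths (hx : x ∈ paths S n) (hi : n ≤ i) : x i = default := by
  induction n generalizing x with
  | zero => simp_all [paths]
  | succ n ih =>
    obtain ⟨z, hz, y, hy, rfl⟩ := mem_paths_succ_iff.1 hx
    rw [update_of_ne (by omega)]
    exact ih hz (by omega)

lemma sum_paths_succ {M : Type*} [AddCommMonoid M] (f : (ℕ → σ) → M) :
    ∑ x ∈ paths S (n + 1), f x = ∑ x ∈ paths S n, ∑ y ∈ S n, f (update x n y) := by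
  classical
  rw [paths, sum_image, sum_product]
  rintro ⟨z, y⟩ hzy ⟨z', y'⟩ hzy' heq
  simp only [coe_product, Set.mem_prod, mem_coe] at hzy hzy' heq
  -- a path of length `n` is recovered from its extension by resetting coordinate `n`
  have hz : z = update (update z n y) n default := by
    rw [update_idem, ← apply_eq_default_of_mem_paths hzy.1 le_rfl, update_eq_self]
  have hz' : z' = update (update z' n y') n default := by
    rw [update_idem, ← apply_eq_default_of_mem_paths hzy'.1 le_rfl, update_eq_self]
  rw [Prod.mk.injEq, hz, hz', heq]
  exact ⟨rfl, by simpa using congrFun heq n⟩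

lemma pathWeight_nonneg (hw₀ : ∀ y ∈ S 0, 0 ≤ w₀ y) (hK : ∀ n x y, 0 ≤ K n x y)
    (hx : x ∈ paths S (n + 1)) : 0 ≤ pathWeight w₀ K n x :=
  mul_nonneg (hw₀ _ (apply_mem_of_mem_paths hx n.succ_pos)) (prod_nonneg fun _ _ => hK _ _ _)

lemma sum_paths_pathWeight_mul_of_dependsOn
    (hK : ∀ n, ∀ x ∈ S n, ∑ y ∈ S (n + 1), K n x y = 1) {g : (ℕ → σ) → ℝ}
    (hg : DependsOn g (Set.Iic j)) (hjn : j ≤ n) :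
    ∑ x ∈ paths S (n + 1), pathWeight w₀ K n x * g x =
      ∑ x ∈ paths S (j + 1), pathWeight w₀ K j x * g x := by
  induction n, hjn using Nat.le_induction with
  | base => rfl
  | succ n hjn ih =>
    rw [sum_paths_succ, ← ih]
    refine sum_congr rfl fun x hx => ?_
    calc ∑ y ∈ S (n + 1),
          pathWeight w₀ K (n + 1) (update x (n + 1) y) * g (update x (n + 1) y)
        = ∑ y ∈ S (n + 1), pathWeight w₀ K n x * g x * K n (x n) y := by
          refine sum_congr rfl fun y _ => ?_
          rw [pathWeight_succ_update, hg fun i hi => update_of_ne (by simp at hi; omega) y x]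
          ring
      _ = pathWeight w₀ K n x * g x := by
          rw [← mul_sum, hK n _ (apply_mem_of_mem_paths hx n.lt_succ_self), mul_one]

lemma sum_paths_pathWeight_mul_apply_self {w : ℕ → σ → ℝ}
    (hw : ∀ n, ∀ y ∈ S (n + 1), ∑ x ∈ S n, w n x * K n x y = w (n + 1) y) (φ : σ → ℝ) :
    ∑ x ∈ paths S (n + 1), pathWeight (w 0) K n x * φ (x n) = ∑ y ∈ S n, w n y * φ y := by
  induction n generalizing φ with
  | zero =>
    rw [sum_paths_succ]
    simp [paths, pathWeight]
  | succ n ih =>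
    calc ∑ x ∈ paths S (n + 2), pathWeight (w 0) K (n + 1) x * φ (x (n + 1))
        = ∑ x ∈ paths S (n + 1),
            pathWeight (w 0) K n x * ∑ y ∈ S (n + 1), K n (x n) y * φ y := by
          rw [sum_paths_succ]
          refine sum_congr rfl fun x _ => ?_
          simp only [pathWeight_succ_update, update_self, mul_sum, mul_assoc]
      _ = ∑ t ∈ S n, w n t * ∑ y ∈ S (n + 1), K n t y * φ y :=
          ih fun t => ∑ y ∈ S (n + 1), K n t y * φ y
      _ = ∑ y ∈ S (n + 1), (∑ x ∈ S n, w n x * K n x y) * φ y := by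
          simp only [mul_sum, sum_mul, mul_assoc]; exact sum_comm
      _ = ∑ y ∈ S (n + 1), w (n + 1) y * φ y := sum_congr rfl fun y hy => by rw [hw n y hy]

lemma sum_paths_pathWeight_mul_apply {w : ℕ → σ → ℝ}
    (hK : ∀ n, ∀ x ∈ S n, ∑ y ∈ S (n + 1), K n x y = 1)
    (hw : ∀ n, ∀ y ∈ S (n + 1), ∑ x ∈ S n, w n x * K n x y = w (n + 1) y) (hjn : j ≤ n)
    (φ : σ → ℝ) :
    ∑ x ∈ paths S (n + 1), pathWeight (w 0) K n x * φ (x j) = ∑ y ∈ S j, w j y * φ y := by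
  rw [sum_paths_pathWeight_mul_of_dependsOn hK
    (fun x y h => by rw [h j (Set.mem_Iic.2 le_rfl)]) hjn, sum_paths_pathWeight_mul_apply_self hw]

end Paths

lemma sum_paths_pathWeight_mul_apply_succ {S : ℕ → Finset ℝ} {w₀ : ℝ → ℝ}
    {K : ℕ → ℝ → ℝ → ℝ} {j n : ℕ} (hK : ∀ n, ∀ x ∈ S n, ∑ y ∈ S (n + 1), K n x y = 1)
    (hbar : ∀ n, ∀ x ∈ S n, ∑ y ∈ S (n + 1), K n x y * y = x)
    {g : (ℕ → ℝ) → ℝ} (hg : DependsOn g (Set.Iic j)) (hjn : j + 1 ≤ n) :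
    ∑ x ∈ paths S (n + 1), pathWeight w₀ K n x * (g x * x (j + 1)) =
      ∑ x ∈ paths S (n + 1), pathWeight w₀ K n x * (g x * x j) := by
  have hgk (k : ℕ) (hk : j ≤ k) : DependsOn (fun x => g x * x k) (Set.Iic k) := fun x y h => by
    dsimp only
    rw [hg.mono (Set.Iic_subset_Iic.2 hk) h, h k (Set.mem_Iic.2 le_rfl)]
  rw [sum_paths_pathWeight_mul_of_dependsOn hK (hgk (j + 1) j.le_succ) hjn,
    sum_paths_pathWeight_mul_of_dependsOn hK (hgk j le_rfl) (by omega), sum_paths_succ]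
  refine sum_congr rfl fun x hx => ?_
  calc ∑ y ∈ S (j + 1), pathWeight w₀ K (j + 1) (update x (j + 1) y) *
        (g (update x (j + 1) y) * update x (j + 1) y (j + 1))
      = ∑ y ∈ S (j + 1), pathWeight w₀ K j x * g x * (K j (x j) y * y) :=
        sum_congr rfl fun y _ => by
          rw [pathWeight_succ_update, update_self,
            hg fun i hi => update_of_ne (by simp at hi; omega) y x]
          ring
    _ = pathWeight w₀ K j x * (g x * x j) := by
        rw [← mul_sum, hbar j _ (apply_mem_of_mem_paths hx j.lt_succ_self)]; ring

section ChainMeasure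

variable {S : ℕ → Finset ℝ} {K : ℕ → ℝ → ℝ → ℝ} {n : ℕ}

noncomputable def chainMeasure (S : ℕ → Finset ℝ) (w₀ : ℝ → ℝ) (K : ℕ → ℝ → ℝ → ℝ) (n : ℕ) :
    Measure (Fin (n + 1) → ℝ) :=
  atomicMeasure (paths S (n + 1)) (pathWeight w₀ K n) fun x i => x i

lemma map_eval_chainMeasure {w : ℕ → ℝ → ℝ} (hw : ∀ n, ∀ y ∈ S n, 0 ≤ w n y)
    (hK₀ : ∀ n x y, 0 ≤ K n x y) (hK : ∀ n, ∀ x ∈ S n, ∑ y ∈ S (n + 1), K n x y = 1)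
    (htr : ∀ n, ∀ y ∈ S (n + 1), ∑ x ∈ S n, w n x * K n x y = w (n + 1) y) (i : Fin (n + 1)) :
    (chainMeasure S (w 0) K n).map (fun x => x i) = atomicMeasure (S i) (w i) id := by
  ext A hA
  rw [Measure.map_apply (measurable_pi_apply i) hA, chainMeasure,
    atomicMeasure_apply fun x hx => pathWeight_nonneg (hw 0) hK₀ hx, atomicMeasure_apply (hw i)]
  convert congrArg ENNReal.ofReal
    (sum_paths_pathWeight_mul_apply hK htr (Nat.lt_succ_iff.1 i.2) (A.indicator 1))
    using 4 <;> rfl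

lemma condExp_chainMeasure {w₀ : ℝ → ℝ} (hw₀ : ∀ y ∈ S 0, 0 ≤ w₀ y)
    (hK₀ : ∀ n x y, 0 ≤ K n x y) (hK : ∀ n, ∀ x ∈ S n, ∑ y ∈ S (n + 1), K n x y = 1)
    (hbar : ∀ n, ∀ x ∈ S n, ∑ y ∈ S (n + 1), K n x y * y = x) (i : ℕ) (h : i + 1 < n + 1) :
    (chainMeasure S w₀ K n)[(fun x => x ⟨i + 1, h⟩) |
        MeasurableSpace.comap
          (fun (x : Fin (n + 1) → ℝ) (j : Fin (i + 1)) => x (Fin.castLE (le_of_lt h) j))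
          inferInstance]
      =ᵐ[chainMeasure S w₀ K n] fun x => x ⟨i, Nat.lt_of_succ_lt h⟩ := by
  set F := fun (x : Fin (n + 1) → ℝ) (j : Fin (i + 1)) => x (Fin.castLE (le_of_lt h) j)
  have hF : Measurable F := measurable_pi_lambda _ fun j => measurable_pi_apply _
  have hV := fun x (hx : x ∈ paths S (n + 1)) => pathWeight_nonneg hw₀ hK₀ hx
  refine (ae_eq_condExp_of_forall_setIntegral_eq hF.comap_le (integrable_atomicMeasure _)
    (fun _ _ _ => (integrable_atomicMeasure _).integrableOn) ?_
    ((measurable_pi_apply (Fin.last i)).comp (comap_measurable F)).aestronglyMeasurable).symm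
  rintro _ ⟨B, hB, rfl⟩ -
  rw [← integral_indicator (hF hB), ← integral_indicator (hF hB),
    integral_atomicMeasure hV, integral_atomicMeasure hV]
  have := sum_paths_pathWeight_mul_apply_succ (w₀ := w₀) hK hbar
    (g := fun x => B.indicator 1 fun j : Fin (i + 1) => x j)
    (fun x y hxy => by
      dsimp only
      congr 2
      exact funext fun j => hxy j (Set.mem_Iic.2 (Nat.lt_succ_iff.1 j.2))) (n := n) (by omega)
  convert this.symm using 3 with x hx x hx <;>
    by_cases hxB : (fun j : Fin (i + 1) => x j) ∈ B <;> simp [F, hxB]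

end ChainMeasure

theorem exists_isMartingaleKernel_seq (ν : ℕ → Measure ℝ)
    [∀ j, IsProbabilityMeasure (ν j)] (hfin : ∀ j, ∃ s : Finset ℝ, ν j (↑s : Set ℝ)ᶜ = 0)
    (hcx : ∀ j, ConvexOrderLE (ν j) (ν (j + 1))) :
    ∃ (S : ℕ → Finset ℝ) (w : ℕ → ℝ → ℝ) (K : ℕ → ℝ → ℝ → ℝ), (∀ j y, 0 ≤ w j y) ∧
      (∀ j, ν j = atomicMeasure (S j) (w j) id) ∧
      ∀ j, IsMartingaleKernel (S j) (S (j + 1)) (w j) (w (j + 1)) (K j) := by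
  choose s hs using hfin
  set S := fun j => {y ∈ s j | (ν j).real {y} ≠ 0}
  have hrep j : ν j = atomicMeasure (S j) (fun y => (ν j).real {y}) id :=
    eq_atomicMeasure_of_measure_compl_eq_zero (ν j) (hs j)
  have hne j : (S j).Nonempty := nonempty_iff_ne_empty.2 fun he =>
    IsProbabilityMeasure.ne_zero (ν j) (by rw [hrep j, he, atomicMeasure, sum_empty])
  have hpos j : ∀ y ∈ S j, 0 < (ν j).real {y} := fun y hy =>
    measureReal_nonneg.lt_of_ne' (mem_filter.1 hy).2
  choose K hK using fun j => exists_isMartingaleKernel (hne j) (hne (j + 1)) (hpos j)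
    (fun _ _ => measureReal_nonneg) (hrep j ▸ hrep (j + 1) ▸ hcx j)
  exact ⟨S, fun j y => (ν j).real {y}, K, fun _ _ => measureReal_nonneg, hrep, hK⟩

/-- Strassen, finite-support case: if `μ₁,…,μ_m` are finitely supported
probability measures on `ℝ`, non-decreasing in convex order, all with mean 1, then there
is a probability measure on `ℝᵐ` with these marginals under which the coordinate process
is a martingale with `E[M₁] = 1`. -/
theorem strassen_finite_support
    (m : ℕ) (hm : 0 < m) (μ : Fin m → Measure ℝ)
    [∀ i, IsProbabilityMeasure (μ i)]
    (hfin : ∀ i, ∃ s : Finset ℝ, μ i (↑s : Set ℝ)ᶜ = 0)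
    (hmean : ∀ i, ∫ x, x ∂μ i = 1)
    (hndco : ∀ f : ℝ → ℝ, ConvexOn ℝ Set.univ f →
      (∃ a b : ℝ, ∀ x, |f x| ≤ a * |x| + b) →
      ∀ i i' : Fin m, i ≤ i' → ∫ x, f x ∂μ i ≤ ∫ x, f x ∂μ i') :
    ∃ π : Measure (Fin m → ℝ), IsProbabilityMeasure π ∧
      (∀ i : Fin m, π.map (fun x => x i) = μ i) ∧
      (∫ x, x ⟨0, hm⟩ ∂π = 1) ∧
      ∀ i : ℕ, ∀ h : i + 1 < m,
        π[(fun x => x ⟨i + 1, h⟩) |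
            MeasurableSpace.comap
              (fun (x : Fin m → ℝ) (j : Fin (i + 1)) => x (Fin.castLE (le_of_lt h) j))
              inferInstance]
          =ᵐ[π] fun x => x ⟨i, Nat.lt_of_succ_lt h⟩ := by
  obtain ⟨n, rfl⟩ := Nat.exists_eq_add_one_of_ne_zero hm.ne'
  -- prolong the sequence by repeating `μ n`, so that every step has a martingale kernel
  obtain ⟨S, w, K, hw, hrep, hK⟩ :=
    exists_isMartingaleKernel_seq (fun j => μ ⟨min j n, by omega⟩) (fun j => hfin _)
      fun j f hf hg => hndco f hf hg _ _ (Fin.mk_le_mk.2 (by omega))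
  have hmarg (i : Fin (n + 1)) : (chainMeasure S (w 0) K n).map (fun x => x i) = μ i := by
    rw [map_eval_chainMeasure (fun j y _ => hw j y) (fun j => (hK j).nonneg)
      (fun j => (hK j).sum_eq_one) (fun j => (hK j).transport), ← hrep]
    simp [Nat.min_eq_left (Nat.lt_succ_iff.1 i.2)]
  have : IsProbabilityMeasure ((chainMeasure S (w 0) K n).map fun x => x 0) :=
    hmarg 0 ▸ inferInstance
  have hprob : IsProbabilityMeasure (chainMeasure S (w 0) K n) :=
    Measure.isProbabilityMeasure_of_map fun x : Fin (n + 1) → ℝ => x 0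
  refine ⟨chainMeasure S (w 0) K n, hprob, hmarg, ?_, condExp_chainMeasure (fun y _ => hw 0 y)
    (fun j => (hK j).nonneg) (fun j => (hK j).sum_eq_one) fun j => (hK j).barycenter⟩
  rw [← hmean 0, ← hmarg 0]
  exact (integral_map (measurable_pi_apply (X := fun _ : Fin (n + 1) => ℝ) 0).aemeasurable
    aestronglyMeasurable_id).symm
end

section
/- The projection problem inf_{μ ∈ 𝓜} 𝕎₁(μ, ν) is equal to the linear program inf_{M ∈ Π} ⟨M, D⟩_F, where Π = ∪_{μ ∈ 𝓜} Γ(μ + ν⁻, ν⁺) and D is the distance matrix. -/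
open Finset

/-- Frobenius inner product of two `N × N` real matrices. -/
noncomputable def frob (N : ℕ) (M D : Matrix (Fin N) (Fin N) ℝ) : ℝ :=
  ∑ p, ∑ q, M p q * D p q

/-- Couplings between two nonnegative vectors (of equal total mass): nonnegative matrices
with prescribed row sums `a` and column sums `b`. -/
def coupl (N : ℕ) (a b : Fin N → ℝ) : Set (Matrix (Fin N) (Fin N) ℝ) :=
  {M | (∀ p q, 0 ≤ M p q) ∧ (∀ p, ∑ q, M p q = a p) ∧ (∀ q, ∑ p, M p q = b q)}

/-- the projection problem `inf_{μ ∈ 𝓜} 𝕎₁(μ,ν)` equals the linear program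
`inf_{M ∈ Π} ⟨M,D⟩_F`, where `𝕎₁(μ,ν) = inf_{M ∈ Γ(μ+ν⁻, ν⁺)} ⟨M,D⟩_F` for `μ ∈ 𝓜`
and `Π = ∪_{μ ∈ 𝓜} Γ(μ+ν⁻, ν⁺)`. -/
theorem projection_equals_linear_program
    (N L : ℕ) (A : Matrix (Fin L) (Fin N) ℝ) (b : Fin L → ℝ)
    (D : Matrix (Fin N) (Fin N) ℝ)
    (x : Fin N → ℝ) (d : ℝ → ℝ → ℝ) (hD : ∀ p q, D p q = d (x p) (x q))
    (νp νm : Fin N → ℝ)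
    (hνm : ∀ p, 0 < νm p) (hνp : ∀ p, 0 ≤ νp p)
    (hmass : ∑ p, νp p = 1 + ∑ p, νm p)
    (Mset : Set (Fin N → ℝ))
    (hMset : Mset = {μ | (∀ p, 0 ≤ μ p) ∧ A.mulVec μ = b})
    (hsum1 : ∀ μ ∈ Mset, ∑ p, μ p = 1)
    (hne : Mset.Nonempty) :
    sInf {c : ℝ | ∃ μ ∈ Mset,
        c = sInf {c' : ℝ | ∃ M ∈ coupl N (μ + νm) νp, c' = frob N M D}}
      = sInf {c : ℝ | ∃ μ ∈ Mset, ∃ M ∈ coupl N (μ + νm) νp, c = frob N M D} := by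
  classical
  set S : ℝ := 1 + ∑ p, νm p with hS
  have hSpos : 0 < S := by
    have : 0 ≤ ∑ p, νm p := Finset.sum_nonneg fun p _ => (hνm p).le
    linarith
  have hνpsum : ∑ p, νp p = S := hmass
  -- each coupling set is nonempty
  have key : ∀ μ ∈ Mset, (fun p q => (μ p + νm p) * νp q / S) ∈ coupl N (μ + νm) νp := by
    intro μ hμ
    have hμnn : ∀ p, 0 ≤ μ p := (hMset ▸ hμ).1
    have hμsum : ∑ p, (μ p + νm p) = S := by
      rw [Finset.sum_add_distrib, hsum1 μ hμ]
    refine ⟨?_, ?_, ?_⟩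
    · intro p q
      have := hμnn p; have := (hνm p).le; have := hνp q
      positivity
    · intro p
      simp only [Pi.add_apply]
      rw [← Finset.sum_div, ← Finset.mul_sum, hνpsum, mul_div_assoc,
        div_self hSpos.ne', mul_one]
    · intro q
      have : ∀ p, (μ p + νm p) * νp q / S = (μ p + νm p) * (νp q / S) := by
        intro p; ring
      simp only [this]
      rw [← Finset.sum_mul, hμsum, mul_div_assoc']
      field_simp
  set B : ℝ := -(S * ∑ p, ∑ q, |D p q|) with hB
  -- uniform lower bound
  have hbound : ∀ μ ∈ Mset, ∀ M ∈ coupl N (μ + νm) νp, B ≤ frob N M D := by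
    intro μ hμ M hM
    obtain ⟨hMnn, hrow, hcol⟩ := hM
    have hμnn : ∀ p, 0 ≤ μ p := (hMset ▸ hμ).1
    have hμsum : ∑ p, (μ p + νm p) = S := by
      rw [Finset.sum_add_distrib, hsum1 μ hμ]
    have hMle : ∀ p q, M p q ≤ S := by
      intro p q
      calc M p q ≤ ∑ q', M p q' :=
            Finset.single_le_sum (fun q' _ => hMnn p q') (Finset.mem_univ q)
        _ = (μ + νm) p := hrow p
        _ ≤ ∑ p', (μ + νm) p' :=
            Finset.single_le_sum
              (fun p' _ => add_nonneg (hμnn p') (hνm p').le) (Finset.mem_univ p)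
        _ = S := hμsum
    have h1 : ∀ p q, -(S * |D p q|) ≤ M p q * D p q := by
      intro p q
      have ha := abs_nonneg (D p q)
      have hn := hMnn p q
      have hl := hMle p q
      have hd := neg_abs_le (D p q)
      have hd2 := le_abs_self (D p q)
      nlinarith
    have h2 : B = ∑ p, ∑ q, -(S * |D p q|) := by
      rw [hB, Finset.mul_sum]
      rw [← Finset.sum_neg_distrib]
      refine Finset.sum_congr rfl fun p _ => ?_
      rw [Finset.mul_sum, ← Finset.sum_neg_distrib]
    rw [h2]
    exact Finset.sum_le_sum fun p _ => Finset.sum_le_sum fun q _ => h1 p q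
  -- names for sets
  set T : Set ℝ := {c : ℝ | ∃ μ ∈ Mset, ∃ M ∈ coupl N (μ + νm) νp, c = frob N M D} with hT
  have hTbdd : BddBelow T := ⟨B, fun c hc => by
    obtain ⟨μ, hμ, M, hM, rfl⟩ := hc
    exact hbound μ hμ M hM⟩
  obtain ⟨μ0, hμ0⟩ := hne
  have hTne : T.Nonempty := ⟨_, μ0, hμ0, _, key μ0 hμ0, rfl⟩
  have hSμne : ∀ μ ∈ Mset,
      {c' : ℝ | ∃ M ∈ coupl N (μ + νm) νp, c' = frob N M D}.Nonempty :=
    fun μ hμ => ⟨_, _, key μ hμ, rfl⟩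
  have hSμbdd : ∀ μ ∈ Mset,
      BddBelow {c' : ℝ | ∃ M ∈ coupl N (μ + νm) νp, c' = frob N M D} :=
    fun μ hμ => ⟨B, fun c hc => by
      obtain ⟨M, hM, rfl⟩ := hc
      exact hbound μ hμ M hM⟩
  set Lset : Set ℝ := {c : ℝ | ∃ μ ∈ Mset,
      c = sInf {c' : ℝ | ∃ M ∈ coupl N (μ + νm) νp, c' = frob N M D}} with hL
  have hLne : Lset.Nonempty := ⟨_, μ0, hμ0, rfl⟩
  have hLbdd : BddBelow Lset := ⟨B, fun c hc => by
    obtain ⟨μ, hμ, rfl⟩ := hc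
    exact le_csInf (hSμne μ hμ) fun c' hc' => by
      obtain ⟨M, hM, rfl⟩ := hc'
      exact hbound μ hμ M hM⟩
  apply le_antisymm
  · refine le_csInf hTne fun c hc => ?_
    obtain ⟨μ, hμ, M, hM, rfl⟩ := hc
    calc sInf Lset ≤ sInf {c' : ℝ | ∃ M ∈ coupl N (μ + νm) νp, c' = frob N M D} :=
          csInf_le hLbdd ⟨μ, hμ, rfl⟩
      _ ≤ frob N M D := csInf_le (hSμbdd μ hμ) ⟨M, hM, rfl⟩
  · refine le_csInf hLne fun c hc => ?_
    obtain ⟨μ, hμ, rfl⟩ := hc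
    exact csInf_le_csInf hTbdd (hSμne μ hμ)
      (fun c' hc' => by obtain ⟨M, hM, rfl⟩ := hc'; exact ⟨μ, hμ, M, hM, rfl⟩)
end

section
/- Both the projection problem inf_{μ ∈ 𝓜} 𝕎₁(μ, ν) and the equivalent linear program inf_{M ∈ Π} ⟨M, D⟩_F admit minimizers. Moreover, if M* minimizes ⟨·, D⟩_F over Π, then μ* = M*𝟙 − ν⁻ minimizes 𝕎₁(·, ν) over 𝓜; conversely, any minimizer μ* of 𝕎₁(·, ν) over 𝓜 admits an optimal coupling M* ∈ Γ(μ* + ν⁻, ν⁺) minimizing ⟨·, D⟩_F over Π. -/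
/-!
Π is compact: its elements are nonnegative matrices with column marginal ν⁺, hence bounded,
and the constraint "row marginal minus ν⁻ lies in 𝓜" is closed. So the continuous linear cost
attains its minimum on Π, and likewise on each `Γ(μ + ν⁻, ν⁺)`, where it equals `𝕎₁(μ, ν)`.
Since `Π` is the union of these coupling sets, `min_Π ⟨·, D⟩ = min_𝓜 𝕎₁(·, ν)` and minimizers
pass back and forth through `M ↦ M𝟙 − ν⁻` and through optimal couplings.
-/

open Finset

/-- `𝕎₁(μ,ν)` for `μ ≥ 0` in the discrete setting: infimal transport cost between
`μ + ν⁻` and `ν⁺`. -/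
noncomputable def WW1d (N : ℕ) (D : Matrix (Fin N) (Fin N) ℝ)
    (νp νm μ : Fin N → ℝ) : ℝ :=
  sInf {c : ℝ | ∃ M ∈ coupl N (μ + νm) νp, c = frob N M D}

section

variable {N : ℕ}

theorem continuous_frob (D : Matrix (Fin N) (Fin N) ℝ) :
    Continuous fun M : Matrix (Fin N) (Fin N) ℝ => frob N M D := by
  unfold frob
  fun_prop

def colCoupl (N : ℕ) (b : Fin N → ℝ) : Set (Matrix (Fin N) (Fin N) ℝ) :=
  {M | (∀ p q, 0 ≤ M p q) ∧ ∀ q, ∑ p, M p q = b q}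

theorem isCompact_colCoupl (b : Fin N → ℝ) : IsCompact (colCoupl N b) := by
  have hclosed : IsClosed (colCoupl N b) := by
    simp only [colCoupl, Set.ofPred_and, Set.ofPred_forall]
    exact (isClosed_iInter fun p => isClosed_iInter fun q =>
      isClosed_le continuous_const (by fun_prop)).inter
      (isClosed_iInter fun q => isClosed_eq (by fun_prop) continuous_const)
  refine (isCompact_univ_pi fun _ => isCompact_univ_pi fun q => isCompact_Icc
    (a := (0 : ℝ)) (b := b q)).of_isClosed_subset hclosed ?_
  rintro M ⟨hpos, hcol⟩ p - q -
  exact ⟨hpos p q, hcol q ▸ single_le_sum (fun i _ => hpos i q) (mem_univ p)⟩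

theorem coupl_eq_colCoupl_inter (a b : Fin N → ℝ) :
    coupl N a b = colCoupl N b ∩ {M | ∀ p, ∑ q, M p q = a p} := by
  ext M
  simp only [coupl, colCoupl, Set.mem_inter_iff, Set.mem_ofPred_eq]
  tauto

theorem isCompact_coupl (a b : Fin N → ℝ) : IsCompact (coupl N a b) := by
  rw [coupl_eq_colCoupl_inter, Set.ofPred_forall]
  exact (isCompact_colCoupl b).inter_right
    (isClosed_iInter fun p => isClosed_eq (by fun_prop) continuous_const)

/-- The product coupling `a ⊗ b / ∑ b`. -/
theorem coupl_nonempty {a b : Fin N → ℝ} (ha : ∀ p, 0 ≤ a p) (hb : ∀ q, 0 ≤ b q)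
    (hab : ∑ p, a p = ∑ q, b q) : (coupl N a b).Nonempty := by
  rcases eq_or_ne (∑ q, b q) 0 with hS | hS
  · have hb0 : b = 0 :=
      funext fun q => (sum_eq_zero_iff_of_nonneg fun q _ => hb q).1 hS q (mem_univ q)
    have ha0 : a = 0 :=
      funext fun p => (sum_eq_zero_iff_of_nonneg fun p _ => ha p).1 (hab ▸ hS) p (mem_univ p)
    exact ⟨0, fun _ _ => le_rfl, fun p => by simp [ha0], fun q => by simp [hb0]⟩
  · refine ⟨fun p q => a p * b q / ∑ q, b q,
      fun p q => div_nonneg (mul_nonneg (ha p) (hb q)) (sum_nonneg fun q _ => hb q),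
      fun p => ?_, fun q => ?_⟩
    · rw [← sum_div, ← mul_sum, mul_div_cancel_right₀ _ hS]
    · rw [← sum_div, ← sum_mul, hab, mul_div_cancel_left₀ _ hS]

theorem rowSum_sub_eq_of_mem_coupl {μ c b : Fin N → ℝ} {M : Matrix (Fin N) (Fin N) ℝ}
    (hM : M ∈ coupl N (μ + c) b) : (fun p => (∑ q, M p q) - c p) = μ := by
  funext p
  rw [hM.2.1 p, Pi.add_apply, add_sub_cancel_right]

theorem setOf_exists_mem_coupl_add_eq (S : Set (Fin N → ℝ)) (c b : Fin N → ℝ) :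
    {M | ∃ μ ∈ S, M ∈ coupl N (μ + c) b} =
      colCoupl N b ∩ (fun M p => (∑ q, M p q) - c p) ⁻¹' S := by
  ext M
  constructor
  · rintro ⟨μ, hμ, hM⟩
    exact ⟨⟨hM.1, hM.2.2⟩, by rwa [Set.mem_preimage, rowSum_sub_eq_of_mem_coupl hM]⟩
  · rintro ⟨⟨hpos, hcol⟩, hS⟩
    exact ⟨_, hS, hpos, fun p => by simp, hcol⟩

theorem isCompact_setOf_exists_mem_coupl_add {S : Set (Fin N → ℝ)} (hS : IsClosed S)
    (c b : Fin N → ℝ) : IsCompact {M | ∃ μ ∈ S, M ∈ coupl N (μ + c) b} := by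
  rw [setOf_exists_mem_coupl_add_eq]
  exact (isCompact_colCoupl b).inter_right (hS.preimage (by fun_prop))

section WW1d

variable (D : Matrix (Fin N) (Fin N) ℝ) {νp νm μ : Fin N → ℝ}

theorem WW1d_le_frob {M : Matrix (Fin N) (Fin N) ℝ} (hM : M ∈ coupl N (μ + νm) νp) :
    WW1d N D νp νm μ ≤ frob N M D := by
  refine csInf_le (((isCompact_coupl (μ + νm) νp).image (continuous_frob D)).bddBelow.mono ?_)
    ⟨M, hM, rfl⟩
  rintro _ ⟨M', hM', rfl⟩
  exact ⟨M', hM', rfl⟩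

theorem le_WW1d {c : ℝ} (hne : (coupl N (μ + νm) νp).Nonempty)
    (h : ∀ M ∈ coupl N (μ + νm) νp, c ≤ frob N M D) : c ≤ WW1d N D νp νm μ := by
  obtain ⟨M, hM⟩ := hne
  exact le_csInf ⟨_, M, hM, rfl⟩ fun _ ⟨M', hM', hc⟩ => hc ▸ h M' hM'

theorem exists_frob_eq_WW1d (hne : (coupl N (μ + νm) νp).Nonempty) :
    ∃ M ∈ coupl N (μ + νm) νp, frob N M D = WW1d N D νp νm μ := by
  obtain ⟨M, hM, hmin⟩ :=
    (isCompact_coupl _ νp).exists_isMinOn hne (continuous_frob D).continuousOn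
  exact ⟨M, hM, le_antisymm (le_WW1d D hne fun M' hM' => hmin hM') (WW1d_le_frob D hM)⟩

theorem WW1d_le_of_minimizes_frob {S : Set (Fin N → ℝ)}
    (hS : ∀ μ ∈ S, (coupl N (μ + νm) νp).Nonempty) {M : Matrix (Fin N) (Fin N) ℝ}
    (hM : M ∈ {M | ∃ μ ∈ S, M ∈ coupl N (μ + νm) νp})
    (hmin : ∀ M' ∈ {M | ∃ μ ∈ S, M ∈ coupl N (μ + νm) νp}, frob N M D ≤ frob N M' D) :
    (fun p => (∑ q, M p q) - νm p) ∈ S ∧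
      ∀ μ' ∈ S, WW1d N D νp νm (fun p => (∑ q, M p q) - νm p) ≤ WW1d N D νp νm μ' := by
  obtain ⟨μ, hμ, hMμ⟩ := hM
  rw [rowSum_sub_eq_of_mem_coupl hMμ]
  refine ⟨hμ, fun μ' hμ' => ?_⟩
  calc WW1d N D νp νm μ ≤ frob N M D := WW1d_le_frob D hMμ
    _ ≤ WW1d N D νp νm μ' := le_WW1d D (hS μ' hμ') fun M' hM' => hmin M' ⟨μ', hμ', hM'⟩

theorem frob_le_of_minimizes_WW1d {S : Set (Fin N → ℝ)}
    (hne : (coupl N (μ + νm) νp).Nonempty)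
    (hmin : ∀ μ' ∈ S, WW1d N D νp νm μ ≤ WW1d N D νp νm μ') :
    ∃ M ∈ coupl N (μ + νm) νp,
      ∀ M' ∈ {M | ∃ μ ∈ S, M ∈ coupl N (μ + νm) νp}, frob N M D ≤ frob N M' D := by
  obtain ⟨M, hM, hMμ⟩ := exists_frob_eq_WW1d D hne
  refine ⟨M, hM, ?_⟩
  rintro M' ⟨μ', hμ', hM'⟩
  calc frob N M D = WW1d N D νp νm μ := hMμ
    _ ≤ WW1d N D νp νm μ' := hmin μ' hμ'
    _ ≤ frob N M' D := WW1d_le_frob D hM'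

end WW1d

theorem isClosed_setOf_nonneg_mulVec_eq {L : ℕ} (A : Matrix (Fin L) (Fin N) ℝ) (b : Fin L → ℝ) :
    IsClosed {μ : Fin N → ℝ | (∀ p, 0 ≤ μ p) ∧ A.mulVec μ = b} :=
  (isClosed_le continuous_const continuous_id).inter (isClosed_eq (by fun_prop) continuous_const)

end

/-- existence of minimizers for the projection problem and the linear
program, together with the correspondence between their minimizers. -/
theorem existence_of_minimizers
    (N L : ℕ) (A : Matrix (Fin L) (Fin N) ℝ) (b : Fin L → ℝ)
    (D : Matrix (Fin N) (Fin N) ℝ)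
    (νp νm : Fin N → ℝ)
    (hνm : ∀ p, 0 < νm p) (hνp : ∀ p, 0 ≤ νp p)
    (hmass : ∑ p, νp p = 1 + ∑ p, νm p)
    (Mset : Set (Fin N → ℝ))
    (hMset : Mset = {μ | (∀ p, 0 ≤ μ p) ∧ A.mulVec μ = b})
    (hsum1 : ∀ μ ∈ Mset, ∑ p, μ p = 1)
    (hne : Mset.Nonempty)
    (Pi' : Set (Matrix (Fin N) (Fin N) ℝ))
    (hPi : Pi' = {M | ∃ μ ∈ Mset, M ∈ coupl N (μ + νm) νp}) :
    (∃ μ ∈ Mset, ∀ μ' ∈ Mset, WW1d N D νp νm μ ≤ WW1d N D νp νm μ') ∧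
    (∃ M ∈ Pi', ∀ M' ∈ Pi', frob N M D ≤ frob N M' D) ∧
    (∀ M ∈ Pi', (∀ M' ∈ Pi', frob N M D ≤ frob N M' D) →
      (fun p => (∑ q, M p q) - νm p) ∈ Mset ∧
      ∀ μ' ∈ Mset, WW1d N D νp νm (fun p => (∑ q, M p q) - νm p) ≤ WW1d N D νp νm μ') ∧
    (∀ μ ∈ Mset, (∀ μ' ∈ Mset, WW1d N D νp νm μ ≤ WW1d N D νp νm μ') →
      ∃ M ∈ coupl N (μ + νm) νp, ∀ M' ∈ Pi', frob N M D ≤ frob N M' D) := by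
  subst hPi
  have hcoupl : ∀ μ ∈ Mset, (coupl N (μ + νm) νp).Nonempty := by
    intro μ hμ
    refine coupl_nonempty (fun p => add_nonneg ((hMset ▸ hμ).1 p) (hνm p).le) hνp ?_
    simp only [Pi.add_apply, sum_add_distrib, hsum1 μ hμ, hmass]
  have hcompact := isCompact_setOf_exists_mem_coupl_add
    (hMset ▸ isClosed_setOf_nonneg_mulVec_eq A b) νm νp
  obtain ⟨μ₀, hμ₀⟩ := hne
  obtain ⟨M₀, hM₀⟩ := hcoupl μ₀ hμ₀
  obtain ⟨M, hM, hmin⟩ :=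
    hcompact.exists_isMinOn ⟨M₀, μ₀, hμ₀, hM₀⟩ (continuous_frob D).continuousOn
  replace hmin := isMinOn_iff.1 hmin
  exact ⟨⟨_, WW1d_le_of_minimizes_frob D hcoupl hM hmin⟩, ⟨M, hM, hmin⟩,
    fun _ => WW1d_le_of_minimizes_frob D hcoupl,
    fun μ hμ => frob_le_of_minimizes_WW1d D (hcoupl μ hμ)⟩
end

section
/- Let A_r ∈ ℝᴺ be nonzero, x ∈ ℝᴺ with x > 0 componentwise, and β ∈ ℝ. Consider f(λ) = Σ_p exp(λ A_{rp}) A_{rp} x_p − β. Then f is strictly increasing, and: (i) if all nonzero entries of A_r are positive and β > 0, f has a unique real root; (ii) if all nonzero entries of A_r are negative and β < 0, f has a unique real root; (iii) if A_r has both positive and negative entries, f has a unique real root for every β ∈ ℝ. -/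
open Finset Filter Topology

private lemma sk_termMono {a c : ℝ} (hc : 0 < c) :
    Monotone (fun t : ℝ => Real.exp (t * a) * a * c) := by
  rcases lt_trichotomy a 0 with h | h | h
  · intro s t hst
    have h1 : Real.exp (t * a) ≤ Real.exp (s * a) :=
      Real.exp_le_exp.mpr (by nlinarith)
    have hac : a * c ≤ 0 := (mul_neg_of_neg_of_pos h hc).le
    dsimp only
    rw [mul_assoc, mul_assoc]
    exact mul_le_mul_of_nonpos_right h1 hac
  · intro s t hst; simp [h]
  · intro s t hst
    have h1 : Real.exp (s * a) ≤ Real.exp (t * a) :=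
      Real.exp_le_exp.mpr (by nlinarith)
    have hac : (0:ℝ) ≤ a * c := by positivity
    dsimp only
    rw [mul_assoc, mul_assoc]
    exact mul_le_mul_of_nonneg_right h1 hac

private lemma sk_termStrict {a c : ℝ} (ha : a ≠ 0) (hc : 0 < c) :
    StrictMono (fun t : ℝ => Real.exp (t * a) * a * c) := by
  rcases ha.lt_or_gt with h | h
  · intro s t hst
    have h1 : Real.exp (t * a) < Real.exp (s * a) :=
      Real.exp_lt_exp.mpr (by nlinarith)
    have hac : a * c < 0 := mul_neg_of_neg_of_pos h hc
    dsimp only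
    rw [mul_assoc, mul_assoc]
    exact mul_lt_mul_of_neg_right h1 hac
  · intro s t hst
    have h1 : Real.exp (s * a) < Real.exp (t * a) :=
      Real.exp_lt_exp.mpr (by nlinarith)
    have hac : (0:ℝ) < a * c := mul_pos h hc
    dsimp only
    rw [mul_assoc, mul_assoc]
    exact mul_lt_mul_of_pos_right h1 hac

private lemma sk_term_lower {a c t : ℝ} (hc : 0 < c) (ht : 0 ≤ t) :
    min 0 (a * c) ≤ Real.exp (t * a) * a * c := by
  rcases le_or_gt 0 a with h | h
  · have : (0:ℝ) ≤ Real.exp (t * a) * a * c := by positivity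
    exact (min_le_left _ _).trans this
  · have h1 : Real.exp (t * a) ≤ 1 := Real.exp_le_one_iff.mpr (by nlinarith)
    have hac : a * c ≤ 0 := (mul_neg_of_neg_of_pos h hc).le
    have h2 : (1:ℝ) * (a * c) ≤ Real.exp (t * a) * (a * c) :=
      mul_le_mul_of_nonpos_right h1 hac
    rw [one_mul] at h2
    rw [mul_assoc]
    exact (min_le_right _ _).trans h2

private lemma sk_term_upper {a c t : ℝ} (hc : 0 < c) (ht : t ≤ 0) :
    Real.exp (t * a) * a * c ≤ max 0 (a * c) := by
  rcases le_or_gt 0 a with h | h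
  · have h1 : Real.exp (t * a) ≤ 1 := Real.exp_le_one_iff.mpr (by nlinarith)
    have hac : (0:ℝ) ≤ a * c := by positivity
    have h2 : Real.exp (t * a) * (a * c) ≤ 1 * (a * c) :=
      mul_le_mul_of_nonneg_right h1 hac
    rw [one_mul] at h2
    rw [mul_assoc]
    exact h2.trans (le_max_right _ _)
  · have : Real.exp (t * a) * a * c ≤ 0 :=
      (mul_neg_of_neg_of_pos (mul_neg_of_pos_of_neg (Real.exp_pos _) h) hc).le
    exact this.trans (le_max_left _ _)

private lemma sk_root {f : ℝ → ℝ} (hmono : StrictMono f) (hcont : Continuous f)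
    (h1 : ∃ a, f a < 0) (h2 : ∃ b, 0 < f b) : ∃! t, f t = 0 := by
  obtain ⟨a, ha⟩ := h1; obtain ⟨b, hb⟩ := h2
  have hab : a ≤ b := le_of_lt (hmono.lt_iff_lt.mp (ha.trans hb))
  obtain ⟨t, _, ht⟩ := intermediate_value_Icc hab hcont.continuousOn ⟨ha.le, hb.le⟩
  exact ⟨t, ht, fun y hy => hmono.injective (hy.trans ht.symm)⟩

/-- the scalar function `f(λ) = Σ_p exp(λ A_p) A_p x_p − β` arising in the
multi-constrained Sinkhorn substeps is strictly increasing, and has a unique real root: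
(i) when all nonzero entries of `A` are positive and `β > 0`;
(ii) when all nonzero entries of `A` are negative and `β < 0`;
(iii) when `A` has entries of both signs, for every `β`. -/
theorem sinkhorn_scalar_root
    (N : ℕ) (A : Fin N → ℝ) (hA : A ≠ 0)
    (x : Fin N → ℝ) (hx : ∀ p, 0 < x p) :
    (∀ β : ℝ, StrictMono (fun t : ℝ => (∑ p, Real.exp (t * A p) * A p * x p) - β)) ∧
    (∀ β : ℝ, (∀ p, 0 ≤ A p) → 0 < β →
      ∃! t : ℝ, (∑ p, Real.exp (t * A p) * A p * x p) - β = 0) ∧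
    (∀ β : ℝ, (∀ p, A p ≤ 0) → β < 0 →
      ∃! t : ℝ, (∑ p, Real.exp (t * A p) * A p * x p) - β = 0) ∧
    ((∃ p, 0 < A p) → (∃ p, A p < 0) →
      ∀ β : ℝ, ∃! t : ℝ, (∑ p, Real.exp (t * A p) * A p * x p) - β = 0) := by
  set g : ℝ → ℝ := fun t => ∑ p, Real.exp (t * A p) * A p * x p with hg
  obtain ⟨p₀, hp₀⟩ : ∃ p, A p ≠ 0 := by
    by_contra h; push_neg at h; exact hA (funext h)
  -- strict monotonicity of g
  have hgmono : StrictMono g := by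
    have key : ∀ t, g t =
        Real.exp (t * A p₀) * A p₀ * x p₀ +
          ∑ p ∈ univ.erase p₀, Real.exp (t * A p) * A p * x p := by
      intro t
      rw [hg]
      exact (Finset.add_sum_erase univ _ (mem_univ p₀)).symm
    have : StrictMono (fun t => Real.exp (t * A p₀) * A p₀ * x p₀ +
        ∑ p ∈ univ.erase p₀, Real.exp (t * A p) * A p * x p) := by
      apply StrictMono.add_monotone (sk_termStrict hp₀ (hx p₀))
      intro s t hst
      exact Finset.sum_le_sum fun p _ => sk_termMono (hx p) hst
    intro s t hst
    rw [key s, key t]; exact this hst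
  have hgcont : Continuous g := by
    apply continuous_finset_sum
    intro p _
    fun_prop
  -- limit lemmas
  have T2 : (∃ p, 0 < A p) → Tendsto g atTop atTop := by
    rintro ⟨q, hq⟩
    set C : ℝ := ∑ p ∈ univ.erase q, min 0 (A p * x p) with hC
    have hlim : Tendsto (fun t => Real.exp (t * A q) * A q * x q + C) atTop atTop := by
      apply tendsto_atTop_add_const_right
      have h1 : Tendsto (fun t : ℝ => t * A q) atTop atTop :=
        tendsto_id.atTop_mul_const hq
      have h2 : Tendsto (fun t : ℝ => Real.exp (t * A q)) atTop atTop :=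
        Real.tendsto_exp_atTop.comp h1
      have h3 := (h2.atTop_mul_const hq).atTop_mul_const (hx q)
      exact h3
    apply tendsto_atTop_mono' atTop _ hlim
    filter_upwards [eventually_ge_atTop (0:ℝ)] with t ht
    have key : g t = Real.exp (t * A q) * A q * x q +
        ∑ p ∈ univ.erase q, Real.exp (t * A p) * A p * x p :=
      (Finset.add_sum_erase univ _ (mem_univ q)).symm
    rw [key]
    gcongr
    exact Finset.sum_le_sum fun p _ => sk_term_lower (hx p) ht
  have T3 : (∃ p, A p < 0) → Tendsto g atBot atBot := by
    rintro ⟨q, hq⟩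
    set D : ℝ := ∑ p ∈ univ.erase q, max 0 (A p * x p) with hD
    have hlim : Tendsto (fun t => Real.exp (t * A q) * A q * x q + D) atBot atBot := by
      apply tendsto_atBot_add_const_right
      have h1 : Tendsto (fun t : ℝ => t * A q) atBot atTop :=
        tendsto_id.atBot_mul_const_of_neg hq
      have h2 : Tendsto (fun t : ℝ => Real.exp (t * A q)) atBot atTop :=
        Real.tendsto_exp_atTop.comp h1
      have h3 := (h2.atTop_mul_const_of_neg hq).atBot_mul_const (hx q)
      exact h3
    apply tendsto_atBot_mono' atBot _ hlim
    filter_upwards [eventually_le_atBot (0:ℝ)] with t ht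
    have key : g t = Real.exp (t * A q) * A q * x q +
        ∑ p ∈ univ.erase q, Real.exp (t * A p) * A p * x p :=
      (Finset.add_sum_erase univ _ (mem_univ q)).symm
    rw [key]
    gcongr
    exact Finset.sum_le_sum fun p _ => sk_term_upper (hx p) ht
  have T1 : (∀ p, 0 ≤ A p) → Tendsto g atBot (𝓝 0) := by
    intro h
    have : Tendsto g atBot (𝓝 (∑ _p : Fin N, (0:ℝ))) := by
      apply tendsto_finset_sum
      intro p _
      rcases (h p).eq_or_lt with hp | hp
      · simp [← hp]
      · have h1 : Tendsto (fun t : ℝ => t * A p) atBot atBot :=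
          tendsto_id.atBot_mul_const hp
        have h2 : Tendsto (fun t : ℝ => Real.exp (t * A p)) atBot (𝓝 0) :=
          Real.tendsto_exp_atBot.comp h1
        simpa using (h2.mul_const (A p)).mul_const (x p)
    simpa using this
  have T1' : (∀ p, A p ≤ 0) → Tendsto g atTop (𝓝 0) := by
    intro h
    have : Tendsto g atTop (𝓝 (∑ _p : Fin N, (0:ℝ))) := by
      apply tendsto_finset_sum
      intro p _
      rcases (h p).lt_or_eq with hp | hp
      · have h1 : Tendsto (fun t : ℝ => t * A p) atTop atBot :=
          tendsto_id.atTop_mul_const_of_neg hp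
        have h2 : Tendsto (fun t : ℝ => Real.exp (t * A p)) atTop (𝓝 0) :=
          Real.tendsto_exp_atBot.comp h1
        simpa using (h2.mul_const (A p)).mul_const (x p)
      · simp [hp]
    simpa using this
  refine ⟨fun β => ?_, fun β hpos hβ => ?_, fun β hneg hβ => ?_, fun hP hN β => ?_⟩
  · intro s t hst
    simpa using sub_lt_sub_right (hgmono hst) β
  · -- case (i)
    apply sk_root (f := fun t => g t - β)
    · intro s t hst; simpa using sub_lt_sub_right (hgmono hst) β
    · exact hgcont.sub continuous_const
    · have := (T1 hpos).eventually (eventually_lt_nhds hβ)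
      obtain ⟨a, ha⟩ := this.exists
      exact ⟨a, by simpa using sub_neg.mpr ha⟩
    · have hq : 0 < A p₀ := (hpos p₀).lt_of_ne (Ne.symm hp₀)
      have := (T2 ⟨p₀, hq⟩).eventually_gt_atTop β
      obtain ⟨b, hb⟩ := this.exists
      exact ⟨b, by simpa using sub_pos.mpr hb⟩
  · -- case (ii)
    apply sk_root (f := fun t => g t - β)
    · intro s t hst; simpa using sub_lt_sub_right (hgmono hst) β
    · exact hgcont.sub continuous_const
    · have hq : A p₀ < 0 := (hneg p₀).lt_of_ne hp₀
      have := (T3 ⟨p₀, hq⟩).eventually_lt_atBot β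
      obtain ⟨a, ha⟩ := this.exists
      exact ⟨a, by simpa using sub_neg.mpr ha⟩
    · have := (T1' hneg).eventually (eventually_gt_nhds hβ)
      obtain ⟨b, hb⟩ := this.exists
      exact ⟨b, by simpa using sub_pos.mpr hb⟩
  · -- case (iii)
    apply sk_root (f := fun t => g t - β)
    · intro s t hst; simpa using sub_lt_sub_right (hgmono hst) β
    · exact hgcont.sub continuous_const
    · have := (T3 hN).eventually_lt_atBot β
      obtain ⟨a, ha⟩ := this.exists
      exact ⟨a, by simpa using sub_neg.mpr ha⟩
    · have := (T2 hP).eventually_gt_atTop β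
      obtain ⟨b, hb⟩ := this.exists
      exact ⟨b, by simpa using sub_pos.mpr hb⟩
end

section
/- Strong duality holds for the entropic projection problem: inf over M ∈ ℝ^{N×N} of Σ_{r=1}^{R−1} ι_{C_r}(M𝟙) + ι_{C_R}(Mᵀ𝟙) + ε KL(M|G) equals sup over u = (u¹,...,u^R) ∈ (ℝᴺ)^R of −Σ_{r=1}^R ι_{C_r}*(−u^r) − ε⟨exp(⊕u/ε) − 𝟙_{N×N}, G⟩_F, where (⊕u)_{pq} = Σ_{r=1}^{R−1} u^r_p + u^R_q. Moreover the unique primal minimizer M_ε has the diagonal-scaling form (M_ε)_{pq} = exp((1/ε)Σ_{r=1}^{R−1} u^r_p) G_{pq} exp((1/ε) u^R_q) for any dual maximizer u. -/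
open Finset

/-- Kullback–Leibler divergence between nonnegative matrices (reference `G > 0`),
convention `0 log 0 = 0`. -/
noncomputable def klSum (N : ℕ) (M G : Matrix (Fin N) (Fin N) ℝ) : ℝ :=
  ∑ p, ∑ q, (M p q * Real.log (M p q / G p q) - M p q + G p q)

/-- Dual objective of the entropic projection problem, for dual variables
`u = (u¹,…,u^R)` (the first `R` components constrain the row sums, the last one the
column sums) and the vector `s` of (finite) values of the conjugates `ι_{C_r}*(−u^r)`. -/
noncomputable def dualObj (N R : ℕ) (ε : ℝ) (G : Matrix (Fin N) (Fin N) ℝ)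
    (u : Fin (R + 1) → Fin N → ℝ) (s : Fin (R + 1) → ℝ) : ℝ :=
  -(∑ r, s r) - ε * ∑ p, ∑ q,
    ((Real.exp (((∑ r : Fin R, u r.castSucc p) + u (Fin.last R) q) / ε) - 1) * G p q)

/-- Set of values of the dual problem: `u` ranges over all dual variables whose
conjugates `ι_{C_r}*(−u^r)` are finite (encoded by `IsLUB`). -/
def dualSet (N R : ℕ) (ε : ℝ) (G : Matrix (Fin N) (Fin N) ℝ)
    (C : Fin (R + 1) → Set (Fin N → ℝ)) : Set ℝ :=
  {c | ∃ u : Fin (R + 1) → Fin N → ℝ, ∃ s : Fin (R + 1) → ℝ,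
    (∀ r, IsLUB {v : ℝ | ∃ x ∈ C r, v = ∑ p, x p * (-(u r p))} (s r)) ∧
    c = dualObj N R ε G u s}

/-!
Weak duality is the Fenchel–Young inequality `m b - (eᵇ - 1) g ≤ g · klFun (m / g)`, summed over
the entries, together with `-s r ≤ ⟨marginal r M, u r⟩` for feasible `M`.

For the converse, minimise jointly over plans `M ≥ 0` and points `x r ∈ C r` the penalised
objective `ε KL(M | G) + c ∑ᵣ ‖marginal r M - x r‖²`. Since `KL` is convex, a minimiser also
minimises the objective with the penalty replaced by its linearisation; this is a Lagrangian whose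
multipliers `u = -2c (marginal M - x)` are dual feasible with dual value at least `ε KL(M)`.
The penalised minimisers lie in a fixed compact set (sublevel sets of `KL` are bounded), and a
common limit point as `c → ∞` is a feasible plan whose value is at most the dual supremum.

Uniqueness of the minimiser is strict convexity of `KL`; the scaling form is the equality case
of Fenchel–Young, forced by a zero duality gap.
-/

open Real InformationTheory

namespace InformationTheory

lemma klFun_exp (b : ℝ) : klFun (exp b) = exp b * b - (exp b - 1) := by
  rw [klFun_apply, log_exp]; ring

lemma mul_sub_exp_lt_klFun {x b : ℝ} (hx : 0 ≤ x) (hxb : x ≠ exp b) :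
    x * b - (exp b - 1) < klFun x := by
  rcases hx.eq_or_lt with rfl | hx
  · simp [klFun_zero, exp_pos]
  have hy : b - log x ≠ 0 := fun h => hxb <| by rw [sub_eq_zero.1 h, exp_log hx]
  have key : x * (b - log x + 1) < exp b := by
    calc x * (b - log x + 1) < x * exp (b - log x) := mul_lt_mul_of_pos_left (add_one_lt_exp hy) hx
      _ = exp b := by rw [exp_sub, exp_log hx]; field_simp
  rw [klFun_apply]; linarith

lemma mul_sub_exp_le_klFun {x : ℝ} (hx : 0 ≤ x) (b : ℝ) : x * b - (exp b - 1) ≤ klFun x := by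
  rcases eq_or_ne x (exp b) with rfl | hxb
  · exact (klFun_exp b).ge
  · exact (mul_sub_exp_lt_klFun hx hxb).le

lemma strictConvexOn_mul_klFun_div {g : ℝ} (hg : 0 < g) :
    StrictConvexOn ℝ (Set.Ici 0) fun m => g * klFun (m / g) := by
  refine ⟨convex_Ici 0, fun x hx y hy hxy a b ha hb hab => ?_⟩
  have h := strictConvexOn_klFun.2 (div_nonneg hx hg.le : 0 ≤ x / g) (div_nonneg hy hg.le)
    (by rwa [Ne, div_left_inj' hg.ne']) ha hb hab
  simp only [smul_eq_mul] at h ⊢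
  rw [show (a * x + b * y) / g = a * (x / g) + b * (y / g) by ring]
  nlinarith [mul_lt_mul_of_pos_left h hg]

end InformationTheory

lemma nonneg_of_forall_nonneg_add_mul {A B : ℝ} (h : ∀ t ∈ Set.Ioc (0 : ℝ) 1, 0 ≤ A + t * B) :
    0 ≤ A := by
  have hlim : Filter.Tendsto (fun t : ℝ => A + t * B) (nhdsWithin 0 (Set.Ioi 0)) (nhds A) := by
    have : Continuous fun t : ℝ => A + t * B := by fun_prop
    simpa using (this.tendsto 0).mono_left nhdsWithin_le_nhds
  exact ge_of_tendsto hlim (Filter.eventually_of_mem (Ioc_mem_nhdsGT one_pos) h)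

theorem ConvexOn.isMinOn_add_dotProduct_of_isMinOn_add_sq {E ι : Type*} [AddCommGroup E]
    [Module ℝ E] [Fintype ι] {S : Set E} {f : E → ℝ} (hf : ConvexOn ℝ S f) (Λ : E →ₗ[ℝ] ι → ℝ)
    (c : ℝ) {z₀ : E} (hz₀ : z₀ ∈ S) (hmin : IsMinOn (fun z => f z + c * (Λ z ⬝ᵥ Λ z)) S z₀) :
    IsMinOn (fun z => f z + 2 * c * (Λ z₀ ⬝ᵥ Λ z)) S z₀ := by
  intro z hz
  set w := Λ z₀
  set v := Λ z - w
  -- compare `z₀` with `(1 - t) • z₀ + t • z`, divide by `t` and let `t → 0⁺`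
  refine sub_nonneg.1 (nonneg_of_forall_nonneg_add_mul (B := c * (v ⬝ᵥ v)) fun t ⟨ht0, ht1⟩ => ?_)
  have hab : (1 - t) + t = 1 := by ring
  have hconv := hf.2 hz₀ hz (sub_nonneg.2 ht1) ht0.le hab
  have hΛ : Λ ((1 - t) • z₀ + t • z) = w + t • v := by
    rw [map_add, map_smul, map_smul, smul_sub, sub_smul, one_smul]; abel
  have hmin_t : f z₀ + c * (w ⬝ᵥ w) ≤
      f ((1 - t) • z₀ + t • z) + c * ((w + t • v) ⬝ᵥ (w + t • v)) :=
    hΛ ▸ hmin (hf.1 hz₀ hz (sub_nonneg.2 ht1) ht0.le hab)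
  have hexp : (w + t • v) ⬝ᵥ (w + t • v) = w ⬝ᵥ w + 2 * t * (w ⬝ᵥ v) + t ^ 2 * (v ⬝ᵥ v) := by
    simp only [dotProduct_add, add_dotProduct, dotProduct_smul, smul_dotProduct, smul_eq_mul,
      dotProduct_comm v w]
    ring
  rw [hexp, dotProduct_sub] at hmin_t
  rw [smul_eq_mul, smul_eq_mul] at hconv
  refine le_of_mul_le_mul_left ?_ ht0
  nlinarith

lemma nonpos_of_forall_nat_succ_mul_le {x B : ℝ} (h : ∀ n : ℕ, (n + 1) * x ≤ B) : x ≤ 0 := by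
  by_contra! hx
  obtain ⟨n, hn⟩ := exists_nat_gt (B / x)
  rw [div_lt_iff₀ hx] at hn
  nlinarith [h n]

lemma dotProduct_self_nonneg {ι : Type*} [Fintype ι] (v : ι → ℝ) : 0 ≤ v ⬝ᵥ v :=
  Finset.sum_nonneg fun i _ => mul_self_nonneg (v i)

namespace EntropicProjection

variable {N : ℕ} {G : Matrix (Fin N) (Fin N) ℝ}

lemma convex_nonneg : Convex ℝ {M : Matrix (Fin N) (Fin N) ℝ | ∀ p q, 0 ≤ M p q} :=
  fun M hM M' hM' a b ha hb _ p q => by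
    simp only [Matrix.add_apply, Matrix.smul_apply, smul_eq_mul]
    exact add_nonneg (mul_nonneg ha (hM p q)) (mul_nonneg hb (hM' p q))

lemma klSum_eq_sum_klFun (hG : ∀ p q, 0 < G p q) (M : Matrix (Fin N) (Fin N) ℝ) :
    klSum N M G = ∑ p, ∑ q, G p q * klFun (M p q / G p q) := by
  refine sum_congr rfl fun p _ => sum_congr rfl fun q _ => ?_
  rw [klFun_apply]
  field_simp [(hG p q).ne']
  ring

lemma klSum_nonneg (hG : ∀ p q, 0 < G p q) {M : Matrix (Fin N) (Fin N) ℝ}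
    (hM : ∀ p q, 0 ≤ M p q) : 0 ≤ klSum N M G := by
  rw [klSum_eq_sum_klFun hG]
  exact sum_nonneg fun p _ => sum_nonneg fun q _ =>
    mul_nonneg (hG p q).le (klFun_nonneg (div_nonneg (hM p q) (hG p q).le))

lemma continuous_klSum (hG : ∀ p q, 0 < G p q) :
    Continuous fun M : Matrix (Fin N) (Fin N) ℝ => klSum N M G := by
  simp only [klSum_eq_sum_klFun hG]
  refine continuous_finsetSum _ fun p _ => continuous_finsetSum _ fun q _ => ?_
  exact continuous_const.mul (continuous_klFun.comp
    (((continuous_apply q).comp (continuous_apply p)).div_const _))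

lemma strictConvexOn_klSum (hG : ∀ p q, 0 < G p q) :
    StrictConvexOn ℝ {M : Matrix (Fin N) (Fin N) ℝ | ∀ p q, 0 ≤ M p q} fun M => klSum N M G := by
  refine ⟨convex_nonneg, fun M hM M' hM' hne a b ha hb hab => ?_⟩
  obtain ⟨p, q, hpq⟩ : ∃ p q, M p q ≠ M' p q := by
    by_contra! h; exact hne (Matrix.ext h)
  have entry := fun p q => (strictConvexOn_mul_klFun_div (hG p q)).convexOn.2
    (Set.mem_Ici.2 (hM p q)) (Set.mem_Ici.2 (hM' p q)) ha.le hb.le hab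
  simp only [klSum_eq_sum_klFun hG, smul_eq_mul, mul_sum, ← sum_add_distrib, Matrix.add_apply,
    Matrix.smul_apply] at entry ⊢
  refine sum_lt_sum (fun p _ => sum_le_sum fun q _ => entry p q)
    ⟨p, mem_univ p, sum_lt_sum (fun q _ => entry p q) ⟨q, mem_univ q, ?_⟩⟩
  exact (strictConvexOn_mul_klFun_div (hG p q)).2 (Set.mem_Ici.2 (hM p q))
    (Set.mem_Ici.2 (hM' p q)) hpq ha hb hab

lemma le_klSum_add (hG : ∀ p q, 0 < G p q) {M : Matrix (Fin N) (Fin N) ℝ}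
    (hM : ∀ p q, 0 ≤ M p q) (p q : Fin N) : M p q ≤ klSum N M G + (exp 1 - 1) * G p q := by
  have hterm : ∀ p q, 0 ≤ G p q * klFun (M p q / G p q) := fun p q =>
    mul_nonneg (hG p q).le (klFun_nonneg (div_nonneg (hM p q) (hG p q).le))
  have hyoung := mul_le_mul_of_nonneg_left
    (mul_sub_exp_le_klFun (div_nonneg (hM p q) (hG p q).le) 1) (hG p q).le
  rw [mul_one, mul_sub, mul_div_cancel₀ _ (hG p q).ne'] at hyoung
  have hsingle : G p q * klFun (M p q / G p q) ≤ klSum N M G := by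
    rw [klSum_eq_sum_klFun hG]
    exact (single_le_sum (fun q _ => hterm p q) (mem_univ q)).trans
      (single_le_sum (fun p _ => sum_nonneg fun q _ => hterm p q) (mem_univ p))
  linarith

/-- The convex conjugate of `KL(· | G)`, evaluated at `b`. -/
noncomputable def klConj (G : Matrix (Fin N) (Fin N) ℝ) (b : Fin N → Fin N → ℝ) : ℝ :=
  ∑ p, ∑ q, (exp (b p q) - 1) * G p q

lemma sum_mul_sub_klConj_eq (hG : ∀ p q, 0 < G p q) (M : Matrix (Fin N) (Fin N) ℝ)
    (b : Fin N → Fin N → ℝ) : ∑ p, ∑ q, M p q * b p q - klConj G b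
      = ∑ p, ∑ q, G p q * (M p q / G p q * b p q - (exp (b p q) - 1)) := by
  simp only [klConj, ← sum_sub_distrib]
  refine sum_congr rfl fun p _ => sum_congr rfl fun q _ => ?_
  field_simp [(hG p q).ne']

lemma sum_mul_sub_klConj_le_klSum (hG : ∀ p q, 0 < G p q) {M : Matrix (Fin N) (Fin N) ℝ}
    (hM : ∀ p q, 0 ≤ M p q) (b : Fin N → Fin N → ℝ) :
    ∑ p, ∑ q, M p q * b p q - klConj G b ≤ klSum N M G := by
  rw [sum_mul_sub_klConj_eq hG, klSum_eq_sum_klFun hG]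
  exact sum_le_sum fun p _ => sum_le_sum fun q _ => mul_le_mul_of_nonneg_left
    (mul_sub_exp_le_klFun (div_nonneg (hM p q) (hG p q).le) _) (hG p q).le

lemma sum_mul_sub_klConj_lt_klSum (hG : ∀ p q, 0 < G p q) {M : Matrix (Fin N) (Fin N) ℝ}
    (hM : ∀ p q, 0 ≤ M p q) {b : Fin N → Fin N → ℝ} (hne : ∃ p q, M p q ≠ exp (b p q) * G p q) :
    ∑ p, ∑ q, M p q * b p q - klConj G b < klSum N M G := by
  obtain ⟨p, q, hpq⟩ := hne
  have entry := fun p q => mul_le_mul_of_nonneg_left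
    (mul_sub_exp_le_klFun (div_nonneg (hM p q) (hG p q).le) (b p q)) (hG p q).le
  rw [sum_mul_sub_klConj_eq hG, klSum_eq_sum_klFun hG]
  refine sum_lt_sum (fun p _ => sum_le_sum fun q _ => entry p q)
    ⟨p, mem_univ p, sum_lt_sum (fun q _ => entry p q) ⟨q, mem_univ q, ?_⟩⟩
  refine mul_lt_mul_of_pos_left (mul_sub_exp_lt_klFun (div_nonneg (hM p q) (hG p q).le) ?_) (hG p q)
  rwa [Ne, div_eq_iff (hG p q).ne']

lemma klSum_exp_mul (hG : ∀ p q, 0 < G p q) (b : Fin N → Fin N → ℝ) :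
    klSum N (Matrix.of fun p q => exp (b p q) * G p q) G
      = ∑ p, ∑ q, exp (b p q) * G p q * b p q - klConj G b := by
  simp only [klSum_eq_sum_klFun hG, klConj, ← sum_sub_distrib]
  refine sum_congr rfl fun p _ => sum_congr rfl fun q _ => ?_
  rw [Matrix.of_apply, mul_div_cancel_right₀ _ (hG p q).ne', klFun_exp]
  ring

variable {R : ℕ}

def marginal (r : Fin (R + 1)) : Matrix (Fin N) (Fin N) ℝ →ₗ[ℝ] Fin N → ℝ where
  toFun M := if r = Fin.last R then fun q => ∑ p, M p q else fun p => ∑ q, M p q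
  map_add' M M' := by split_ifs <;> ext <;> simp [sum_add_distrib]
  map_smul' c M := by split_ifs <;> ext <;> simp [mul_sum]

lemma marginal_castSucc (r : Fin R) (M : Matrix (Fin N) (Fin N) ℝ) :
    marginal r.castSucc M = fun p => ∑ q, M p q := by
  simp [marginal, (Fin.castSucc_lt_last r).ne]

lemma marginal_last (M : Matrix (Fin N) (Fin N) ℝ) :
    marginal (Fin.last R) M = fun q => ∑ p, M p q := by
  simp [marginal]

def feasibleSet (C : Fin (R + 1) → Set (Fin N → ℝ)) : Set (Matrix (Fin N) (Fin N) ℝ) :=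
  {M | (∀ p q, 0 ≤ M p q) ∧ ∀ r, marginal r M ∈ C r}

lemma setOf_eq_feasibleSet (C : Fin (R + 1) → Set (Fin N → ℝ)) :
    {M : Matrix (Fin N) (Fin N) ℝ | (∀ p q, 0 ≤ M p q) ∧
      (∀ r : Fin R, (fun p => ∑ q, M p q) ∈ C r.castSucc) ∧ (fun q => ∑ p, M p q) ∈ C (Fin.last R)}
      = feasibleSet C := by
  ext M
  simp only [feasibleSet, Fin.forall_fin_succ', marginal_castSucc, marginal_last]

lemma convex_feasibleSet {C : Fin (R + 1) → Set (Fin N → ℝ)} (hC : ∀ r, Convex ℝ (C r)) :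
    Convex ℝ (feasibleSet C) := by
  refine fun M hM M' hM' a b ha hb hab => ⟨convex_nonneg hM.1 hM'.1 ha hb hab, fun r => ?_⟩
  rw [map_add, map_smul, map_smul]
  exact hC r (hM.2 r) (hM'.2 r) ha hb hab

/-- The tensor sum `(⊕u)_{pq} = ∑_{r < R} u^r_p + u^R_q` of the dual variables. -/
def potential (u : Fin (R + 1) → Fin N → ℝ) (p q : Fin N) : ℝ :=
  (∑ r : Fin R, u r.castSucc p) + u (Fin.last R) q

lemma sum_mul_potential (M : Matrix (Fin N) (Fin N) ℝ) (u : Fin (R + 1) → Fin N → ℝ) :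
    ∑ p, ∑ q, M p q * potential u p q = ∑ r, marginal r M ⬝ᵥ u r := by
  simp only [Fin.sum_univ_castSucc, marginal_castSucc, marginal_last, dotProduct, potential,
    mul_add, sum_add_distrib, mul_sum, sum_mul]
  exact congrArg₂ (· + ·) ((sum_congr rfl fun p _ => sum_comm).trans sum_comm) sum_comm

lemma dualObj_eq (ε : ℝ) (u : Fin (R + 1) → Fin N → ℝ) (s : Fin (R + 1) → ℝ) :
    dualObj N R ε G u s = -∑ r, s r - ε * klConj G fun p q => potential u p q / ε := rfl

variable {C : Fin (R + 1) → Set (Fin N → ℝ)} {ε : ℝ} {M : Matrix (Fin N) (Fin N) ℝ}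
  {u : Fin (R + 1) → Fin N → ℝ} {s : Fin (R + 1) → ℝ}

lemma neg_sum_le_sum_mul_potential (hM : M ∈ feasibleSet C)
    (hs : ∀ r, IsLUB {v : ℝ | ∃ x ∈ C r, v = ∑ p, x p * (-(u r p))} (s r)) :
    -∑ r, s r ≤ ∑ p, ∑ q, M p q * potential u p q := by
  rw [sum_mul_potential, ← sum_neg_distrib]
  refine sum_le_sum fun r _ => ?_
  have := (hs r).1 ⟨marginal r M, hM.2 r, rfl⟩
  simp only [mul_neg, sum_neg_distrib] at this
  rw [dotProduct]
  linarith

lemma dualObj_le_sum_mul_sub_klConj (hε : 0 < ε) (hM : M ∈ feasibleSet C)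
    (hs : ∀ r, IsLUB {v : ℝ | ∃ x ∈ C r, v = ∑ p, x p * (-(u r p))} (s r)) :
    dualObj N R ε G u s ≤ ε * (∑ p, ∑ q, M p q * (potential u p q / ε)
      - klConj G fun p q => potential u p q / ε) := by
  have := neg_sum_le_sum_mul_potential hM hs
  simp only [mul_div_assoc', ← sum_div]
  rw [dualObj_eq, mul_sub, mul_div_cancel₀ _ hε.ne']
  linarith

lemma dualObj_le_klSum (hε : 0 < ε) (hG : ∀ p q, 0 < G p q) (hM : M ∈ feasibleSet C)
    (hs : ∀ r, IsLUB {v : ℝ | ∃ x ∈ C r, v = ∑ p, x p * (-(u r p))} (s r)) :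
    dualObj N R ε G u s ≤ ε * klSum N M G :=
  (dualObj_le_sum_mul_sub_klConj hε hM hs).trans
    (mul_le_mul_of_nonneg_left (sum_mul_sub_klConj_le_klSum hG hM.1 _) hε.le)

lemma eq_exp_potential_mul_of_dualObj_eq (hε : 0 < ε) (hG : ∀ p q, 0 < G p q)
    (hM : M ∈ feasibleSet C)
    (hs : ∀ r, IsLUB {v : ℝ | ∃ x ∈ C r, v = ∑ p, x p * (-(u r p))} (s r))
    (heq : dualObj N R ε G u s = ε * klSum N M G) (p q : Fin N) :
    M p q = exp (potential u p q / ε) * G p q := by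
  by_contra hne
  refine ((dualObj_le_sum_mul_sub_klConj hε hM hs).trans_lt ?_).ne heq
  exact mul_lt_mul_of_pos_left (sum_mul_sub_klConj_lt_klSum hG hM.1 ⟨p, q, hne⟩) hε

def residual :
    Matrix (Fin N) (Fin N) ℝ × (Fin (R + 1) → Fin N → ℝ) →ₗ[ℝ] Fin (R + 1) × Fin N → ℝ where
  toFun z j := marginal j.1 z.1 j.2 - z.2 j.1 j.2
  map_add' z w := by ext j; simp; ring
  map_smul' c z := by ext j; simp; ring

lemma continuous_residual : Continuous (residual (N := N) (R := R)) :=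
  LinearMap.continuous_of_finiteDimensional _

def penaltyDomain (C : Fin (R + 1) → Set (Fin N → ℝ)) :
    Set (Matrix (Fin N) (Fin N) ℝ × (Fin (R + 1) → Fin N → ℝ)) :=
  {M | ∀ p q, 0 ≤ M p q} ×ˢ Set.univ.pi C

lemma convex_penaltyDomain (hC : ∀ r, Convex ℝ (C r)) : Convex ℝ (penaltyDomain C) :=
  convex_nonneg.prod (convex_pi fun r _ => hC r)

lemma isClosed_penaltyDomain (hC : ∀ r, IsClosed (C r)) : IsClosed (penaltyDomain C) := by
  refine IsClosed.prod ?_ (isClosed_set_pi fun r _ => hC r)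
  simp only [Set.ofPred_forall]
  exact isClosed_iInter fun p => isClosed_iInter fun q =>
    isClosed_le continuous_const ((continuous_apply q).comp (continuous_apply p))

noncomputable def lagrangian (ε : ℝ) (G : Matrix (Fin N) (Fin N) ℝ) (u : Fin (R + 1) → Fin N → ℝ)
    (z : Matrix (Fin N) (Fin N) ℝ × (Fin (R + 1) → Fin N → ℝ)) : ℝ :=
  ε * klSum N z.1 G - Function.uncurry u ⬝ᵥ residual z

lemma lagrangian_mk (M : Matrix (Fin N) (Fin N) ℝ) (x : Fin (R + 1) → Fin N → ℝ) :
    lagrangian ε G u (M, x) = ε * klSum N M G - ∑ p, ∑ q, M p q * potential u p q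
      - ∑ r, ∑ i, x r i * (-(u r i)) := by
  simp only [lagrangian, dotProduct, Fintype.sum_prod_type, sum_mul_potential, residual,
    LinearMap.coe_mk, AddHom.coe_mk, Function.uncurry_apply_pair, mul_sub, sum_sub_distrib,
    mul_neg, sum_neg_distrib, mul_comm (u _ _)]
  ring

/-- The Lagrangian separates in `M` and in each `x r`: at a minimiser, `x r` attains the support
value `s r`, and comparing with `M = exp (⊕u / ε) * G` bounds the minimum by the dual objective. -/
lemma exists_mem_dualSet_ge_of_isMinOn_lagrangian (hε : 0 < ε) (hG : ∀ p q, 0 < G p q)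
    {z : Matrix (Fin N) (Fin N) ℝ × (Fin (R + 1) → Fin N → ℝ)} (hz : z ∈ penaltyDomain C)
    (hmin : IsMinOn (lagrangian ε G u) (penaltyDomain C) z) :
    ∃ v ∈ dualSet N R ε G C, lagrangian ε G u z ≤ v := by
  obtain ⟨M, x⟩ := z
  obtain ⟨hM, hx⟩ := hz
  set φ : Fin (R + 1) → (Fin N → ℝ) → ℝ := fun r y => ∑ i, y i * (-(u r i))
  have hlub : ∀ r, IsLUB {v : ℝ | ∃ y ∈ C r, v = ∑ p, y p * (-(u r p))} (φ r (x r)) := by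
    refine fun r => ⟨?_, fun b hb => hb ⟨x r, hx r trivial, rfl⟩⟩
    rintro _ ⟨y, hy, rfl⟩
    have hupd : (M, Function.update x r y) ∈ penaltyDomain C := ⟨hM, fun r' _ => by
      rcases eq_or_ne r' r with rfl | h
      · simpa using hy
      · simpa [h] using hx r' trivial⟩
    have h := isMinOn_iff.1 hmin _ hupd
    have hsum : ∑ r', φ r' (Function.update x r y r') = φ r y - φ r (x r) + ∑ r', φ r' (x r') := by
      simp only [Function.apply_update φ x r y, sum_update_of_mem (mem_univ r),
        sum_eq_add_sum_sdiff_singleton_of_mem (mem_univ r) (fun r' => φ r' (x r'))]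
      ring
    rw [lagrangian_mk, lagrangian_mk] at h
    change _ - ∑ r', φ r' (x r') ≤ _ - ∑ r', φ r' (Function.update x r y r') at h
    rw [hsum] at h
    linarith
  refine ⟨dualObj N R ε G u fun r => φ r (x r), ⟨u, _, hlub, rfl⟩, ?_⟩
  set b : Fin N → Fin N → ℝ := fun p q => potential u p q / ε
  have hMb : (Matrix.of fun p q => exp (b p q) * G p q, x) ∈ penaltyDomain C :=
    ⟨fun p q => (mul_pos (exp_pos _) (hG p q)).le, hx⟩
  have h := isMinOn_iff.1 hmin _ hMb
  have hb : ε * ∑ p, ∑ q, exp (b p q) * G p q * b p q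
      = ∑ p, ∑ q, Matrix.of (fun p q => exp (b p q) * G p q) p q * potential u p q := by
    simp only [mul_sum, Matrix.of_apply, b]
    exact sum_congr rfl fun p _ => sum_congr rfl fun q _ => by field_simp
  rw [lagrangian_mk, lagrangian_mk, klSum_exp_mul hG, mul_sub, hb] at h
  rw [dualObj_eq, lagrangian_mk]
  linarith

lemma isCompact_penaltySublevel (hG : ∀ p q, 0 < G p q) (hC : ∀ r, IsClosed (C r)) (β γ : ℝ) :
    IsCompact {z | z ∈ penaltyDomain C ∧ klSum N z.1 G ≤ β ∧ residual z ⬝ᵥ residual z ≤ γ} := by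
  have hclosed := (isClosed_penaltyDomain hC).inter
    ((isClosed_le ((continuous_klSum hG).comp continuous_fst) (continuous_const (y := β))).inter
      (isClosed_le (continuous_residual.dotProduct continuous_residual)
        (continuous_const (y := γ))))
  set boxM : Set (Matrix (Fin N) (Fin N) ℝ) :=
    Set.univ.pi fun p => Set.univ.pi fun q => Set.Icc 0 (β + (exp 1 - 1) * G p q)
  have hboxM : IsCompact boxM := isCompact_univ_pi fun p => isCompact_univ_pi fun q => isCompact_Icc
  have hboxD : IsCompact (Set.univ.pi fun _ : Fin (R + 1) × Fin N => Set.Icc (-√γ) √γ) :=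
    isCompact_univ_pi fun _ => isCompact_Icc
  set Φ : Matrix (Fin N) (Fin N) ℝ × (Fin (R + 1) × Fin N → ℝ) → Fin (R + 1) → Fin N → ℝ :=
    fun w r i => marginal r w.1 i - w.2 (r, i)
  have hΦ : Continuous Φ := continuous_pi fun r => continuous_pi fun i =>
    ((continuous_apply i).comp
      ((marginal r).continuous_of_finiteDimensional.comp continuous_fst)).sub
      ((continuous_apply (r, i)).comp continuous_snd)
  refine (hboxM.prod ((hboxM.prod hboxD).image hΦ)).of_isClosed_subset hclosed ?_
  rintro ⟨M, x⟩ ⟨⟨hM, -⟩, hkl, hQ⟩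
  have hMbox : M ∈ boxM := fun p _ q _ => ⟨hM p q, (le_klSum_add hG hM p q).trans (by linarith)⟩
  refine ⟨hMbox, (M, residual (M, x)), ⟨hMbox, fun j _ => ?_⟩, ?_⟩
  · have hsq : residual (M, x) j ^ 2 ≤ γ := (sq (residual (M, x) j)).symm ▸
      (single_le_sum (fun j _ => mul_self_nonneg (residual (M, x) j)) (mem_univ j)).trans hQ
    exact abs_le.1 (Real.abs_le_sqrt hsq)
  · funext r i
    simp [Φ, residual]

lemma exists_isMinOn_penalized (hε : 0 < ε) (hG : ∀ p q, 0 < G p q) (hC : ∀ r, IsClosed (C r))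
    {M₀ : Matrix (Fin N) (Fin N) ℝ} (hM₀ : M₀ ∈ feasibleSet C) {c : ℝ} (hc : 1 ≤ c) :
    ∃ z ∈ penaltyDomain C, IsMinOn (fun z => ε * klSum N z.1 G + c * (residual z ⬝ᵥ residual z))
      (penaltyDomain C) z ∧
      ε * klSum N z.1 G + c * (residual z ⬝ᵥ residual z) ≤ ε * klSum N M₀ G := by
  set F : Matrix (Fin N) (Fin N) ℝ × (Fin (R + 1) → Fin N → ℝ) → ℝ :=
    fun z => ε * klSum N z.1 G + c * (residual z ⬝ᵥ residual z)
  have hFcont : Continuous F :=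
    (continuous_const.mul ((continuous_klSum hG).comp continuous_fst)).add
      (continuous_const.mul (continuous_residual.dotProduct continuous_residual))
  set z₀ : Matrix (Fin N) (Fin N) ℝ × (Fin (R + 1) → Fin N → ℝ) := (M₀, fun r => marginal r M₀)
  have hz₀ : z₀ ∈ penaltyDomain C := ⟨hM₀.1, fun r _ => hM₀.2 r⟩
  have hFz₀ : F z₀ = ε * klSum N M₀ G := by
    have : residual z₀ = 0 := by ext j; simp [residual, z₀]
    simp only [F, this, dotProduct_zero, mul_zero, add_zero, z₀]
  have hsub : ∀ z ∈ penaltyDomain C, F z ≤ ε * klSum N M₀ G →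
      z ∈ {z | z ∈ penaltyDomain C ∧ klSum N z.1 G ≤ klSum N M₀ G ∧
        residual z ⬝ᵥ residual z ≤ ε * klSum N M₀ G} := by
    intro z hz hFz
    have hQ : 0 ≤ residual z ⬝ᵥ residual z := dotProduct_self_nonneg _
    have hKL : 0 ≤ klSum N z.1 G := klSum_nonneg hG hz.1
    exact ⟨hz, le_of_mul_le_mul_left (by nlinarith) hε, by nlinarith⟩
  obtain ⟨z, hzK, hzmin⟩ := (isCompact_penaltySublevel hG hC _ _).exists_isMinOn
    ⟨z₀, hsub z₀ hz₀ hFz₀.le⟩ hFcont.continuousOn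
  refine ⟨z, hzK.1, fun z' hz' => ?_, (hzmin (hsub z₀ hz₀ hFz₀.le)).trans hFz₀.le⟩
  by_cases hz'K : F z' ≤ ε * klSum N M₀ G
  · exact hzmin (hsub z' hz' hz'K)
  · exact (hzmin (hsub z₀ hz₀ hFz₀.le)).trans (hFz₀.trans_le (le_of_not_ge hz'K))

lemma exists_small_residual_le_mem_dualSet (hε : 0 < ε) (hG : ∀ p q, 0 < G p q)
    (hCclosed : ∀ r, IsClosed (C r)) (hCconv : ∀ r, Convex ℝ (C r))
    {M₀ : Matrix (Fin N) (Fin N) ℝ} (hM₀ : M₀ ∈ feasibleSet C) {c : ℝ} (hc : 1 ≤ c) :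
    ∃ z ∈ penaltyDomain C, klSum N z.1 G ≤ klSum N M₀ G ∧
      c * (residual z ⬝ᵥ residual z) ≤ ε * klSum N M₀ G ∧
      ∃ v ∈ dualSet N R ε G C, ε * klSum N z.1 G ≤ v := by
  obtain ⟨z, hz, hmin, hFz⟩ := exists_isMinOn_penalized hε hG hCclosed hM₀ hc
  have hconv : ConvexOn ℝ (penaltyDomain C) fun z => ε * klSum N z.1 G :=
    (((strictConvexOn_klSum hG).convexOn.comp_linearMap (LinearMap.fst ℝ _ _)).subset
      (fun z hz => hz.1) (convex_penaltyDomain hCconv)).smul hε.le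
  have hlin := hconv.isMinOn_add_dotProduct_of_isMinOn_add_sq residual c hz hmin
  set u := Function.curry (-(2 * c) • residual z)
  have hL : (fun z' => ε * klSum N z'.1 G + 2 * c * (residual z ⬝ᵥ residual z'))
      = lagrangian ε G u := by
    funext z'
    simp only [lagrangian, u, Function.uncurry_curry, neg_smul, neg_dotProduct, smul_dotProduct,
      smul_eq_mul]
    ring
  obtain ⟨v, hv, hle⟩ := exists_mem_dualSet_ge_of_isMinOn_lagrangian hε hG hz (hL ▸ hlin)
  rw [← hL] at hle
  beta_reduce at hle
  have hQ := dotProduct_self_nonneg (residual z)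
  have hKL := klSum_nonneg hG hz.1
  exact ⟨z, hz, le_of_mul_le_mul_left (by nlinarith) hε, by nlinarith, v, hv, by nlinarith⟩

lemma mem_feasibleSet_of_residual_eq_zero
    {z : Matrix (Fin N) (Fin N) ℝ × (Fin (R + 1) → Fin N → ℝ)} (hz : z ∈ penaltyDomain C)
    (h : residual z = 0) : z.1 ∈ feasibleSet C := by
  refine ⟨hz.1, fun r => ?_⟩
  have : marginal r z.1 = z.2 r := funext fun i => sub_eq_zero.1 (congrFun h (r, i))
  exact this ▸ hz.2 r trivial

lemma exists_mem_feasibleSet_isLUB_dualSet (hε : 0 < ε) (hG : ∀ p q, 0 < G p q)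
    (hCclosed : ∀ r, IsClosed (C r)) (hCconv : ∀ r, Convex ℝ (C r))
    {M₀ : Matrix (Fin N) (Fin N) ℝ} (hM₀ : M₀ ∈ feasibleSet C) :
    ∃ M ∈ feasibleSet C, IsLUB (dualSet N R ε G C) (ε * klSum N M G) := by
  set D := dualSet N R ε G C
  have hweak : ∀ M ∈ feasibleSet C, ε * klSum N M G ∈ upperBounds D := by
    rintro M hM _ ⟨u, s, hs, rfl⟩
    exact dualObj_le_klSum hε hG hM hs
  have happrox := fun n : ℕ =>
    exists_small_residual_le_mem_dualSet hε hG hCclosed hCconv hM₀ (c := n + 1) (by simp)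
  obtain ⟨-, -, -, -, v₀, hv₀, -⟩ := happrox 0
  have hbdd : BddAbove D := ⟨_, hweak M₀ hM₀⟩
  set B := ε * klSum N M₀ G
  have hsub := isCompact_penaltySublevel hG hCclosed (klSum N M₀ G) B
  -- `K n` contains the penalised minimiser for `c = n + 1`; a common point has zero residual.
  set K : ℕ → Set (Matrix (Fin N) (Fin N) ℝ × (Fin (R + 1) → Fin N → ℝ)) := fun n =>
    {z | z ∈ penaltyDomain C ∧ klSum N z.1 G ≤ klSum N M₀ G ∧ residual z ⬝ᵥ residual z ≤ B} ∩
      {z | ε * klSum N z.1 G ≤ sSup D ∧ (n + 1) * (residual z ⬝ᵥ residual z) ≤ B}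
  obtain ⟨z, hz⟩ : (⋂ n, K n).Nonempty := by
    refine IsCompact.nonempty_iInter_of_sequence_nonempty_isCompact_isClosed K
      (fun n z hz => ⟨hz.1, hz.2.1, ?_⟩) (fun n => ?_)
      (hsub.of_isClosed_subset ?_ Set.inter_subset_left) (fun n => ?_)
    · have := hz.2.2
      push_cast at this
      nlinarith [dotProduct_self_nonneg (residual z)]
    · obtain ⟨z, hz, hkl, hQ, v, hv, hle⟩ := happrox n
      have hQ0 := dotProduct_self_nonneg (residual z)
      exact ⟨z, ⟨hz, hkl, by nlinarith [n.cast_nonneg (α := ℝ)]⟩, hle.trans (le_csSup hbdd hv), hQ⟩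
    all_goals
      exact hsub.isClosed.inter
        ((isClosed_le (continuous_const.mul ((continuous_klSum hG).comp continuous_fst))
          continuous_const).inter
          (isClosed_le (continuous_const.mul
            (continuous_residual.dotProduct continuous_residual)) continuous_const))
  simp only [Set.mem_iInter] at hz
  have hres : residual z = 0 := dotProduct_self_eq_zero.1 <| le_antisymm
    (nonpos_of_forall_nat_succ_mul_le fun n => (hz n).2.2) (dotProduct_self_nonneg _)
  have hfeas := mem_feasibleSet_of_residual_eq_zero (hz 0).1.1 hres
  exact ⟨z.1, hfeas, hweak _ hfeas, fun b hb => (hz 0).2.1.trans (csSup_le ⟨v₀, hv₀⟩ hb)⟩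

end EntropicProjection

open EntropicProjection in
theorem entropic_strong_duality_general
    (N R : ℕ) (ε : ℝ) (hε : 0 < ε)
    (G : Matrix (Fin N) (Fin N) ℝ) (hG : ∀ p q, 0 < G p q)
    (C : Fin (R + 1) → Set (Fin N → ℝ))
    (hCclosed : ∀ r, IsClosed (C r)) (hCconv : ∀ r, Convex ℝ (C r))
    (Pi' : Set (Matrix (Fin N) (Fin N) ℝ))
    (hPi : Pi' = {M | (∀ p q, 0 ≤ M p q) ∧
      (∀ r : Fin R, (fun p => ∑ q, M p q) ∈ C r.castSucc) ∧
      (fun q => ∑ p, M p q) ∈ C (Fin.last R)})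
    (hqual : ∃ M₀ ∈ Pi', ∀ p q, 0 < M₀ p q) :
    sInf {c : ℝ | ∃ M ∈ Pi', c = ε * klSum N M G} = sSup (dualSet N R ε G C) ∧
    (∃! Mε : Matrix (Fin N) (Fin N) ℝ,
      Mε ∈ Pi' ∧ ∀ M ∈ Pi', klSum N Mε G ≤ klSum N M G) ∧
    ∀ Mε : Matrix (Fin N) (Fin N) ℝ,
      (Mε ∈ Pi' ∧ ∀ M ∈ Pi', klSum N Mε G ≤ klSum N M G) →
      ∀ u : Fin (R + 1) → Fin N → ℝ, ∀ s : Fin (R + 1) → ℝ,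
        (∀ r, IsLUB {v : ℝ | ∃ x ∈ C r, v = ∑ p, x p * (-(u r p))} (s r)) →
        dualObj N R ε G u s = sSup (dualSet N R ε G C) →
        ∀ p q, Mε p q
          = Real.exp ((1 / ε) * ∑ r : Fin R, u r.castSucc p) * G p q *
            Real.exp ((1 / ε) * u (Fin.last R) q) := by
  subst hPi
  rw [setOf_eq_feasibleSet] at hqual ⊢
  obtain ⟨M₀, hM₀, -⟩ := hqual
  obtain ⟨M, hM, hlub⟩ := exists_mem_feasibleSet_isLUB_dualSet hε hG hCclosed hCconv hM₀
  have hopt : ∀ M' ∈ feasibleSet C, klSum N M G ≤ klSum N M' G := fun M' hM' =>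
    le_of_mul_le_mul_left (hlub.2 fun _ ⟨u, s, hs, hv⟩ => hv ▸ dualObj_le_klSum hε hG hM' hs) hε
  have hsup : sSup (dualSet N R ε G C) = ε * klSum N M G := hlub.csSup_eq hlub.nonempty
  have hinf : sInf {c | ∃ M' ∈ feasibleSet C, c = ε * klSum N M' G} = ε * klSum N M G :=
    IsLeast.csInf_eq ⟨⟨M, hM, rfl⟩, by
      rintro _ ⟨M', hM', rfl⟩
      exact mul_le_mul_of_nonneg_left (hopt M' hM') hε.le⟩
  refine ⟨hinf.trans hsup.symm, ⟨M, ⟨hM, hopt⟩, fun M' ⟨hM', hopt'⟩ => ?_⟩, ?_⟩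
  · exact ((strictConvexOn_klSum hG).subset (fun _ h => h.1)
      (convex_feasibleSet hCconv)).eq_of_isMinOn (isMinOn_iff.2 hopt') (isMinOn_iff.2 hopt) hM' hM
  · rintro M' ⟨hM', hopt'⟩ u s hs hus p q
    have hval : dualObj N R ε G u s = ε * klSum N M' G := by
      rw [hus, hsup, le_antisymm (hopt M' hM') (hopt' M hM)]
    rw [eq_exp_potential_mul_of_dualObj_eq hε hG hM' hs hval p q, potential, add_div, exp_add,
      one_div_mul_eq_div, one_div_mul_eq_div]
    ring

/-- strong duality for the entropic projection problem, and the diagonal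
scaling form of the unique primal minimizer in terms of any dual maximizer. -/
theorem entropic_strong_duality
    (N R : ℕ) (ε : ℝ) (hε : 0 < ε)
    (G : Matrix (Fin N) (Fin N) ℝ) (hG : ∀ p q, 0 < G p q)
    (C : Fin (R + 1) → Set (Fin N → ℝ))
    (hCclosed : ∀ r, IsClosed (C r)) (hCconv : ∀ r, Convex ℝ (C r))
    (νplus : Fin N → ℝ) (hlast : C (Fin.last R) = {νplus})
    (Pi' : Set (Matrix (Fin N) (Fin N) ℝ))
    (hPi : Pi' = {M | (∀ p q, 0 ≤ M p q) ∧
      (∀ r : Fin R, (fun p => ∑ q, M p q) ∈ C r.castSucc) ∧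
      (fun q => ∑ p, M p q) ∈ C (Fin.last R)})
    (hqual : ∃ M₀ ∈ Pi', ∀ p q, 0 < M₀ p q) :
    sInf {c : ℝ | ∃ M ∈ Pi', c = ε * klSum N M G} = sSup (dualSet N R ε G C) ∧
    (∃! Mε : Matrix (Fin N) (Fin N) ℝ,
      Mε ∈ Pi' ∧ ∀ M ∈ Pi', klSum N Mε G ≤ klSum N M G) ∧
    ∀ Mε : Matrix (Fin N) (Fin N) ℝ,
      (Mε ∈ Pi' ∧ ∀ M ∈ Pi', klSum N Mε G ≤ klSum N M G) →
      ∀ u : Fin (R + 1) → Fin N → ℝ, ∀ s : Fin (R + 1) → ℝ,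
        (∀ r, IsLUB {v : ℝ | ∃ x ∈ C r, v = ∑ p, x p * (-(u r p))} (s r)) →
        dualObj N R ε G u s = sSup (dualSet N R ε G C) →
        ∀ p q, Mε p q
          = Real.exp ((1 / ε) * ∑ r : Fin R, u r.castSucc p) * G p q *
            Real.exp ((1 / ε) * u (Fin.last R) q) :=
  entropic_strong_duality_general N R ε hε G hG C hCclosed hCconv Pi' hPi hqual
end
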